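/- arXiv:2110.06054 — 4 statements merged into one kernel-verified Lean document; each statement's English description precedes it below -/
import Mathlib

section
/- For every finite simple graph without isolated vertices and every k ∈ {1,…,n}, the functions p ↦ λ_k⁻(Δ_p) and p ↦ λ_k⁺(Δ_p) are locally Lipschitz continuous on [1,+∞). -/
open scoped BigOperators Pointwise NNReal Classical

noncomputable section

/-! ### The graph `p`-Laplacian: Rayleigh quotients, genus, variational eigenvalues -/

/-- `Σ_{{i,j}∈E} |x_i − x_j|^p` (each unordered edge counted once). -/
def TVp {n : ℕ} (G : SimpleGraph (Fin n)) [DecidableRel G.Adj] (p : ℝ) (x : Fin n → ℝ) : ℝ :=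
  (∑ i : Fin n, ∑ j : Fin n, if G.Adj i j then |x i - x j| ^ p else 0) / 2

/-- `Σ_{i∈V} deg(i)·|x_i|^p`. -/
def Np {n : ℕ} (G : SimpleGraph (Fin n)) [DecidableRel G.Adj] (p : ℝ) (x : Fin n → ℝ) : ℝ :=
  ∑ i : Fin n, (G.degree i : ℝ) * |x i| ^ p

/-- The `p`-Rayleigh quotient `F_p`. -/
def Fp {n : ℕ} (G : SimpleGraph (Fin n)) [DecidableRel G.Adj] (p : ℝ) (x : Fin n → ℝ) : ℝ :=
  TVp G p x / Np G p x

/-- A set is (centrally) symmetric if `S = -S`. -/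
def SymmSet {n : ℕ} (S : Set (Fin n → ℝ)) : Prop := ∀ x ∈ S, -x ∈ S

/-- There is a continuous odd map from `S` to the unit sphere `𝕊^{k-1} ⊂ ℝ^k`. -/
def HasOddMapToSphere {n : ℕ} (S : Set (Fin n → ℝ)) (k : ℕ) : Prop :=
  ∃ φ : (Fin n → ℝ) → EuclideanSpace ℝ (Fin k),
    ContinuousOn φ S ∧ (∀ x ∈ S, ‖φ x‖ = 1) ∧ ∀ x ∈ S, φ (-x) = -φ x

/-- There is a continuous odd map from the unit sphere `𝕊^{k-1} ⊂ ℝ^k` to `S`. -/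
def HasOddMapFromSphere {n : ℕ} (S : Set (Fin n → ℝ)) (k : ℕ) : Prop :=
  ∃ φ : EuclideanSpace ℝ (Fin k) → (Fin n → ℝ),
    ContinuousOn φ (Metric.sphere (0 : EuclideanSpace ℝ (Fin k)) 1) ∧
    (∀ x ∈ Metric.sphere (0 : EuclideanSpace ℝ (Fin k)) 1, φ x ∈ S) ∧
    ∀ x ∈ Metric.sphere (0 : EuclideanSpace ℝ (Fin k)) 1, φ (-x) = -φ x

/-- The Krasnoselskii genus `γ⁻`. -/
def genNeg {n : ℕ} (S : Set (Fin n → ℝ)) : ℕ :=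
  if S.Nonempty ∧ SymmSet S then sInf {k | 1 ≤ k ∧ HasOddMapToSphere S k} else 0

/-- The index `γ⁺`. -/
def genPos {n : ℕ} (S : Set (Fin n → ℝ)) : ℕ :=
  if S.Nonempty ∧ SymmSet S then sSup {k | 1 ≤ k ∧ HasOddMapFromSphere S k} else 0

/-- Admissible sets for the min-max principle: symmetric compact subsets of `ℝ^n∖{0}`. -/
def Admissible {n : ℕ} (S : Set (Fin n → ℝ)) : Prop :=
  IsCompact S ∧ (0 : Fin n → ℝ) ∉ S ∧ SymmSet S

/-- The variational eigenvalues `λ_k⁻(Δ_p)`. -/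
def lamNeg {n : ℕ} (G : SimpleGraph (Fin n)) [DecidableRel G.Adj] (p : ℝ) (k : ℕ) : ℝ :=
  sInf {r | ∃ S : Set (Fin n → ℝ), Admissible S ∧ k ≤ genNeg S ∧ r = sSup (Fp G p '' S)}

/-- The min-max eigenvalues `λ_k⁺(Δ_p)`. -/
def lamPos {n : ℕ} (G : SimpleGraph (Fin n)) [DecidableRel G.Adj] (p : ℝ) (k : ℕ) : ℝ :=
  sInf {r | ∃ S : Set (Fin n → ℝ), Admissible S ∧ k ≤ genPos S ∧ r = sSup (Fp G p '' S)}

/-! ### Eigenpairs of `Δ_p` -/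

/-- The set-valued sign: `Sgn(t) = {1}` if `t>0`, `[-1,1]` if `t=0`, `{-1}` if `t<0`. -/
def Sgn (t : ℝ) : Set ℝ := if 0 < t then {1} else if t < 0 then {-1} else Set.Icc (-1) 1

/-- Eigenpairs of the graph `p`-Laplacian for `p > 1`.  (Note that for `t = 0` the
expression `|t|^(p-2) * t` equals `0`, matching the convention `|t|^{p-2}t = 0`.) -/
def IsEigenpairP {n : ℕ} (G : SimpleGraph (Fin n)) [DecidableRel G.Adj] (p lam : ℝ)
    (x : Fin n → ℝ) : Prop :=
  x ≠ 0 ∧ ∀ i, (∑ j : Fin n, if G.Adj i j then |x i - x j| ^ (p - 2) * (x i - x j) else 0) =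
    lam * (G.degree i : ℝ) * (|x i| ^ (p - 2) * x i)

/-- Eigenpairs of the graph `1`-Laplacian. -/
def IsEigenpair1 {n : ℕ} (G : SimpleGraph (Fin n)) [DecidableRel G.Adj] (lam : ℝ)
    (x : Fin n → ℝ) : Prop :=
  x ≠ 0 ∧ ∃ z : Fin n → Fin n → ℝ,
    (∀ i j, G.Adj i j → z i j ∈ Sgn (x i - x j)) ∧
    (∀ i j, G.Adj i j → z i j = -z j i) ∧
    ∀ i, (∑ j : Fin n, if G.Adj i j then z i j else 0) ∈
      (fun s => lam * (G.degree i : ℝ) * s) '' Sgn (x i)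

/-- Eigenpairs of `Δ_p` for `p ≥ 1` (with the `1`-Laplacian convention at `p = 1`). -/
def IsEigenpair {n : ℕ} (G : SimpleGraph (Fin n)) [DecidableRel G.Adj] (p lam : ℝ)
    (x : Fin n → ℝ) : Prop :=
  (p = 1 ∧ IsEigenpair1 G lam x) ∨ (1 < p ∧ IsEigenpairP G p lam x)

/-! ### Cheeger constants -/

/-- `|∂A|`: the number of edges with exactly one endpoint in `A`. -/
def eBoundary {n : ℕ} (G : SimpleGraph (Fin n)) [DecidableRel G.Adj] (A : Finset (Fin n)) : ℕ :=
  ∑ i ∈ A, ∑ j ∈ Aᶜ, if G.Adj i j then 1 else 0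

/-- `vol(A) = Σ_{i∈A} deg(i)`. -/
def volG {n : ℕ} (G : SimpleGraph (Fin n)) [DecidableRel G.Adj] (A : Finset (Fin n)) : ℕ :=
  ∑ i ∈ A, G.degree i

/-- The multi-way Cheeger constants `h_k`. -/
def cheeger {n : ℕ} (G : SimpleGraph (Fin n)) [DecidableRel G.Adj] (k : ℕ) : ℝ :=
  sInf {r | ∃ A : Fin k → Finset (Fin n), (∀ i, (A i).Nonempty) ∧
    (∀ i j, i ≠ j → Disjoint (A i) (A j)) ∧
    r = ⨆ i, (eBoundary G (A i) : ℝ) / (volG G (A i) : ℝ)}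
/-! ### The map Φ -/

/-- `Φ_c(x)_i = |x_i|^c · sign(x_i)`. -/
def Phi {n : ℕ} (c : ℝ) (x : Fin n → ℝ) : Fin n → ℝ := fun i => |x i| ^ c * Real.sign (x i)

/-! ### The simplicial complex `K_n` and the modified Cheeger constants -/

/-- The vector `1_A - 1_B`. -/
def charVec {n : ℕ} (A B : Finset (Fin n)) : Fin n → ℝ :=
  fun i => if i ∈ A then 1 else if i ∈ B then -1 else 0

/-- The inclusion order on pairs of sets: `(A,B) ≺ (A',B')` iff `A ⊆ A'` and `B ⊆ B'`. -/
def pairLE {n : ℕ} (a b : Finset (Fin n) × Finset (Fin n)) : Prop := a.1 ⊆ b.1 ∧ a.2 ⊆ b.2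

/-- The geometric realization `|K(𝒜)|`: the union over all chains of elements of `𝒜` of the
convex hulls of the corresponding vectors `1_A - 1_B`. -/
def geomComplex {n : ℕ} (𝒜 : Set (Finset (Fin n) × Finset (Fin n))) : Set (Fin n → ℝ) :=
  ⋃ (C : Set (Finset (Fin n) × Finset (Fin n))) (_ : C ⊆ 𝒜) (_ : IsChain pairLE C),
    convexHull ℝ ((fun ab => charVec ab.1 ab.2) '' C)

/-- The modified combinatorial `k`-way Cheeger constant `ĥ_k⁻`. -/
def hHatNeg {n : ℕ} (G : SimpleGraph (Fin n)) [DecidableRel G.Adj] (k : ℕ) : ℝ :=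
  sInf {r | ∃ 𝒜 : Set (Finset (Fin n) × Finset (Fin n)),
    (∀ ab ∈ 𝒜, Disjoint ab.1 ab.2 ∧ (ab.1 ∪ ab.2).Nonempty) ∧
    k ≤ genNeg (geomComplex 𝒜) ∧
    r = sSup ((fun ab : Finset (Fin n) × Finset (Fin n) =>
      ((eBoundary G ab.1 : ℝ) + (eBoundary G ab.2 : ℝ)) / (volG G (ab.1 ∪ ab.2) : ℝ)) '' 𝒜)}

/-! ### Subpartitions into cliques and the pseudo-independence number -/

/-- `c(V_i) = 1` if `|V_i| ≤ 2` and `c(V_i) = 2` if `|V_i| ≥ 3`. -/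
def cOf {n : ℕ} (A : Finset (Fin n)) : ℕ := if A.card ≤ 2 then 1 else 2

/-- A subpartition of `V` into sets each inducing a complete subgraph of `G`. -/
def IsCliqueSubpartition {n : ℕ} (G : SimpleGraph (Fin n)) (P : Finset (Finset (Fin n))) : Prop :=
  (∀ A ∈ P, A.Nonempty ∧ G.IsClique (A : Set (Fin n))) ∧
    ∀ A ∈ P, ∀ B ∈ P, A ≠ B → Disjoint A B

/-- The members of `P` are pairwise non-adjacent: every edge of `G` meets at most one of them. -/
def PairwiseNonAdjacent {n : ℕ} (G : SimpleGraph (Fin n)) (P : Finset (Finset (Fin n))) : Prop :=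
  ∀ i j, G.Adj i j → ∀ A ∈ P, ∀ B ∈ P, (i ∈ A ∨ j ∈ A) → (i ∈ B ∨ j ∈ B) → A = B

/-- The pseudo-independence number `α_*(G)`. -/
def pseudoIndepNum {n : ℕ} (G : SimpleGraph (Fin n)) : ℕ :=
  sSup {m | ∃ P : Finset (Finset (Fin n)), IsCliqueSubpartition G P ∧
    PairwiseNonAdjacent G P ∧ m = ∑ A ∈ P, cOf A}

/-- `h_*(P)`. -/
def hStar {n : ℕ} (G : SimpleGraph (Fin n)) [DecidableRel G.Adj]
    (P : Finset (Finset (Fin n))) : ℝ :=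
  sInf {r | ∃ A : Finset (Fin n), A.Nonempty ∧ (∀ v ∈ A, ∃ W ∈ P, v ∈ W) ∧
    (∀ W ∈ P, (A ∩ W).card ≤ 1) ∧ r = (eBoundary G A : ℝ) / (volG G A : ℝ)}

/-! ### The set-valued 1-Laplacian and the p-Laplacian operator -/

/-- The set `Δ_1 x`. -/
def Delta1Set {n : ℕ} (G : SimpleGraph (Fin n)) [DecidableRel G.Adj] (x : Fin n → ℝ) :
    Set (Fin n → ℝ) :=
  {v | ∃ z : Fin n → Fin n → ℝ,
    (∀ i j, G.Adj i j → z i j ∈ Sgn (x i - x j)) ∧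
    (∀ i j, G.Adj i j → z i j = -z j i) ∧
    v = fun i => ∑ j : Fin n, if G.Adj i j then z i j else 0}

/-- The `p`-Laplacian `Δ_p x` for `p > 1`. -/
def DeltaP {n : ℕ} (G : SimpleGraph (Fin n)) [DecidableRel G.Adj] (p : ℝ) (x : Fin n → ℝ) :
    Fin n → ℝ :=
  fun i => ∑ j : Fin n, if G.Adj i j then |x i - x j| ^ (p - 2) * (x i - x j) else 0

/-- The normalized eigenspace `Ŝ_λ(Δ_p)`. -/
def hatS {n : ℕ} (G : SimpleGraph (Fin n)) [DecidableRel G.Adj] (p lam : ℝ) :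
    Set (Fin n → ℝ) :=
  {x | ‖x‖ = 1 ∧ IsEigenpair G p lam x}



section Aux2
variable {n : ℕ} (G : SimpleGraph (Fin n)) [DecidableRel G.Adj]

private lemma TVp_nonneg (p : ℝ) (x : Fin n → ℝ) : 0 ≤ TVp G p x := by
  unfold TVp
  apply div_nonneg _ two_pos.le
  apply Finset.sum_nonneg; intro i _
  apply Finset.sum_nonneg; intro j _
  split
  · exact Real.rpow_nonneg (abs_nonneg _) _
  · exact le_refl 0

private lemma deg_le (i : Fin n) : (G.degree i : ℝ) ≤ n := by
  have := G.degree_lt_card_verts i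
  simp only [Fintype.card_fin] at this
  exact_mod_cast this.le

private lemma TVp_le {p P : ℝ} (hp : 1 ≤ p) (hpP : p ≤ P) {x : Fin n → ℝ}
    (hx : ‖x‖ ≤ 1) : TVp G p x ≤ (n:ℝ)^2 * 2 ^ P := by
  have hterm : ∀ i j : Fin n, (if G.Adj i j then |x i - x j| ^ p else 0) ≤ 2 ^ P := by
    intro i j
    have h2P : (1:ℝ) ≤ 2 ^ P := Real.one_le_rpow one_le_two (by linarith)
    split
    · have hb : |x i - x j| ≤ 2 := by
        have h1 : ‖x i‖ ≤ 1 := (norm_le_pi_norm x i).trans hx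
        have h2 : ‖x j‖ ≤ 1 := (norm_le_pi_norm x j).trans hx
        simp only [Real.norm_eq_abs] at h1 h2
        calc |x i - x j| ≤ |x i| + |x j| := abs_sub _ _
          _ ≤ 2 := by linarith
      calc |x i - x j| ^ p ≤ (2:ℝ) ^ p := Real.rpow_le_rpow (abs_nonneg _) hb (by linarith)
        _ ≤ 2 ^ P := Real.rpow_le_rpow_of_exponent_le one_le_two hpP
    · linarith
  unfold TVp
  have hsum : (∑ i : Fin n, ∑ j : Fin n, if G.Adj i j then |x i - x j| ^ p else 0)
      ≤ ∑ _i : Fin n, ∑ _j : Fin n, (2:ℝ) ^ P := by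
    apply Finset.sum_le_sum; intro i _
    exact Finset.sum_le_sum fun j _ => hterm i j
  simp only [Finset.sum_const, Finset.card_univ, Fintype.card_fin, nsmul_eq_mul] at hsum
  have h2P : (0:ℝ) ≤ 2 ^ P := Real.rpow_nonneg two_pos.le _
  have : (n:ℝ) * ((n:ℝ) * 2 ^ P) = (n:ℝ)^2 * 2^P := by ring
  rw [this] at hsum
  have hTV := TVp_nonneg G p x
  unfold TVp at hTV
  nlinarith [hsum]

private lemma Np_le {p : ℝ} (hp : 0 ≤ p) {x : Fin n → ℝ} (hx : ‖x‖ ≤ 1) :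
    Np G p x ≤ (n:ℝ)^2 := by
  unfold Np
  have : ∀ i : Fin n, (G.degree i : ℝ) * |x i| ^ p ≤ (n:ℝ) := by
    intro i
    have h1 : |x i| ^ p ≤ 1 := by
      apply Real.rpow_le_one (abs_nonneg _) _ hp
      have := (norm_le_pi_norm x i).trans hx
      simpa using this
    calc (G.degree i : ℝ) * |x i| ^ p ≤ (n:ℝ) * 1 := by
          apply mul_le_mul (deg_le G i) h1 (Real.rpow_nonneg (abs_nonneg _) _) (by positivity)
      _ = n := mul_one _
  calc Np G p x = ∑ i : Fin n, (G.degree i : ℝ) * |x i| ^ p := rfl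
    _ ≤ ∑ _i : Fin n, (n:ℝ) := Finset.sum_le_sum fun i _ => this i
    _ = (n:ℝ)^2 := by simp [Finset.sum_const]; ring

private lemma one_le_Np (hdeg : ∀ i, 0 < G.degree i) {p : ℝ} {x : Fin n → ℝ}
    (hx : ‖x‖ = 1) : 1 ≤ Np G p x := by
  have hex : ∃ i, |x i| = 1 := by
    by_contra h
    push_neg at h
    have hlt : ∀ i, ‖x i‖ < 1 := by
      intro i
      have hle : ‖x i‖ ≤ 1 := by rw [← hx]; exact norm_le_pi_norm x i
      rcases lt_or_eq_of_le hle with h' | h'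
      · exact h'
      · exact absurd (by simpa using h') (h i)
    have := (pi_norm_lt_iff one_pos).2 hlt
    rw [hx] at this; exact lt_irrefl _ this
  obtain ⟨i, hi⟩ := hex
  have hterm : (1:ℝ) ≤ (G.degree i : ℝ) * |x i| ^ p := by
    rw [hi, Real.one_rpow, mul_one]
    exact_mod_cast hdeg i
  calc (1:ℝ) ≤ (G.degree i : ℝ) * |x i| ^ p := hterm
    _ ≤ Np G p x := by
      apply Finset.single_le_sum (f := fun j => (G.degree j : ℝ) * |x j| ^ p) _ (Finset.mem_univ i)
      intro j _
      exact mul_nonneg (Nat.cast_nonneg _) (Real.rpow_nonneg (abs_nonneg _) _)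


private lemma exp_diff_le (s t : ℝ) :
    |Real.exp s - Real.exp t| ≤ max (Real.exp s) (Real.exp t) * |s - t| := by
  wlog h : t ≤ s generalizing s t
  · rw [abs_sub_comm, abs_sub_comm s t, max_comm]; exact this t s (le_of_not_ge h)
  have h2 : Real.exp (s - t) - 1 ≤ (s - t) * Real.exp (s - t) := by
    have h3 := Real.add_one_le_exp (-(s - t))
    have h4 : Real.exp (-(s-t)) * Real.exp (s-t) = 1 := by
      rw [← Real.exp_add]; simp
    nlinarith [Real.exp_pos (s - t)]
  have h1 : Real.exp s - Real.exp t = Real.exp t * (Real.exp (s - t) - 1) := by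
    rw [mul_sub, ← Real.exp_add]; ring_nf
  rw [abs_of_nonneg (sub_nonneg.2 (Real.exp_le_exp.2 h)), abs_of_nonneg (sub_nonneg.2 h)]
  calc Real.exp s - Real.exp t = Real.exp t * (Real.exp (s - t) - 1) := h1
    _ ≤ Real.exp t * ((s - t) * Real.exp (s - t)) := by
        exact mul_le_mul_of_nonneg_left h2 (Real.exp_pos t).le
    _ = Real.exp t * Real.exp (s - t) * (s - t) := by ring
    _ = Real.exp s * (s - t) := by rw [← Real.exp_add]; ring_nf
    _ ≤ max (Real.exp s) (Real.exp t) * (s - t) := by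
        exact mul_le_mul_of_nonneg_right (le_max_left _ _) (sub_nonneg.2 h)

private lemma rpow_diff_le {a p q P : ℝ} (ha0 : 0 ≤ a) (ha2 : a ≤ 2)
    (hp : 1 ≤ p) (hpP : p ≤ P) (hq : 1 ≤ q) (hqP : q ≤ P) :
    |a ^ p - a ^ q| ≤ 2 ^ P * |p - q| := by
  have hP1 : (1:ℝ) ≤ 2 ^ P := Real.one_le_rpow one_le_two (le_trans zero_le_one (hp.trans hpP))
  rcases eq_or_lt_of_le ha0 with h0 | h0
  · rw [← h0, Real.zero_rpow (by linarith), Real.zero_rpow (by linarith)]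
    simp; positivity
  have hrw : ∀ r : ℝ, a ^ r = Real.exp (Real.log a * r) := fun r =>
    Real.rpow_def_of_pos h0 r
  have key : max (a ^ p) (a ^ q) * |Real.log a| ≤ 2 ^ P := by
    rcases le_or_gt a 1 with ha1 | ha1
    · have hap : a ^ p ≤ a := by
        calc a ^ p ≤ a ^ (1:ℝ) := Real.rpow_le_rpow_of_exponent_ge h0 ha1 hp
          _ = a := Real.rpow_one a
      have haq : a ^ q ≤ a := by
        calc a ^ q ≤ a ^ (1:ℝ) := Real.rpow_le_rpow_of_exponent_ge h0 ha1 hq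
          _ = a := Real.rpow_one a
      have h5 : max (a ^ p) (a ^ q) ≤ a := max_le hap haq
      have h6 := Real.abs_log_mul_self_lt a h0 ha1
      have : max (a ^ p) (a ^ q) * |Real.log a| ≤ a * |Real.log a| :=
        mul_le_mul_of_nonneg_right h5 (abs_nonneg _)
      calc max (a ^ p) (a ^ q) * |Real.log a| ≤ a * |Real.log a| := this
        _ = |Real.log a * a| := by rw [abs_mul, abs_of_pos h0]; ring
        _ ≤ 1 := h6.le
        _ ≤ 2 ^ P := hP1
    · have hbl : ∀ r : ℝ, 1 ≤ r → r ≤ P → a ^ r ≤ 2 ^ P := fun r h1r hrP => by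
        calc a ^ r ≤ 2 ^ r := Real.rpow_le_rpow ha0 ha2 (by linarith)
          _ ≤ 2 ^ P := Real.rpow_le_rpow_of_exponent_le one_le_two hrP
      have hlog : |Real.log a| ≤ 1 := by
        rw [abs_of_nonneg (Real.log_nonneg ha1.le)]
        have := Real.log_le_sub_one_of_pos h0
        linarith
      calc max (a ^ p) (a ^ q) * |Real.log a| ≤ 2 ^ P * 1 := by
            exact mul_le_mul (max_le (hbl p hp hpP) (hbl q hq hqP)) hlog (abs_nonneg _) (by positivity)
        _ = 2 ^ P := mul_one _
  calc |a ^ p - a ^ q| = |Real.exp (Real.log a * p) - Real.exp (Real.log a * q)| := by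
        rw [hrw, hrw]
    _ ≤ max (Real.exp (Real.log a * p)) (Real.exp (Real.log a * q)) * |Real.log a * p - Real.log a * q| :=
        exp_diff_le _ _
    _ = max (a ^ p) (a ^ q) * (|Real.log a| * |p - q|) := by
        rw [← hrw, ← hrw, ← abs_mul]; ring_nf
    _ = (max (a ^ p) (a ^ q) * |Real.log a|) * |p - q| := by ring
    _ ≤ 2 ^ P * |p - q| := mul_le_mul_of_nonneg_right key (abs_nonneg _)


private lemma TVp_diff (G : SimpleGraph (Fin n)) [DecidableRel G.Adj] {p q P : ℝ}
    (hp : 1 ≤ p) (hpP : p ≤ P) (hq : 1 ≤ q) (hqP : q ≤ P) {x : Fin n → ℝ} (hx : ‖x‖ ≤ 1) :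
    |TVp G p x - TVp G q x| ≤ (n:ℝ)^2 * 2 ^ P * |p - q| := by
  have hterm : ∀ i j : Fin n,
      |(if G.Adj i j then |x i - x j| ^ p else 0) - (if G.Adj i j then |x i - x j| ^ q else 0)|
        ≤ 2 ^ P * |p - q| := by
    intro i j
    split
    · have hb : |x i - x j| ≤ 2 := by
        have h1 : ‖x i‖ ≤ 1 := (norm_le_pi_norm x i).trans hx
        have h2 : ‖x j‖ ≤ 1 := (norm_le_pi_norm x j).trans hx
        simp only [Real.norm_eq_abs] at h1 h2
        calc |x i - x j| ≤ |x i| + |x j| := abs_sub _ _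
          _ ≤ 2 := by linarith
      exact rpow_diff_le (abs_nonneg _) hb hp hpP hq hqP
    · simp; positivity
  have key : |(∑ i : Fin n, ∑ j : Fin n, if G.Adj i j then |x i - x j| ^ p else 0)
      - (∑ i : Fin n, ∑ j : Fin n, if G.Adj i j then |x i - x j| ^ q else 0)|
      ≤ (n:ℝ)^2 * (2 ^ P * |p - q|) := by
    rw [← Finset.sum_sub_distrib]
    calc |∑ i : Fin n, ((∑ j : Fin n, if G.Adj i j then |x i - x j| ^ p else 0)
          - ∑ j : Fin n, if G.Adj i j then |x i - x j| ^ q else 0)|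
        ≤ ∑ i : Fin n, |(∑ j : Fin n, if G.Adj i j then |x i - x j| ^ p else 0)
          - ∑ j : Fin n, if G.Adj i j then |x i - x j| ^ q else 0| :=
          Finset.abs_sum_le_sum_abs _ _
      _ ≤ ∑ _i : Fin n, ((n:ℝ) * (2 ^ P * |p - q|)) := by
          apply Finset.sum_le_sum; intro i _
          rw [← Finset.sum_sub_distrib]
          calc |∑ j : Fin n, ((if G.Adj i j then |x i - x j| ^ p else 0)
                - (if G.Adj i j then |x i - x j| ^ q else 0))|
              ≤ ∑ j : Fin n, |(if G.Adj i j then |x i - x j| ^ p else 0)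
                - (if G.Adj i j then |x i - x j| ^ q else 0)| := Finset.abs_sum_le_sum_abs _ _
            _ ≤ ∑ _j : Fin n, (2:ℝ) ^ P * |p - q| :=
                Finset.sum_le_sum fun j _ => hterm i j
            _ = (n:ℝ) * (2 ^ P * |p - q|) := by
                rw [Finset.sum_const, Finset.card_univ, Fintype.card_fin, nsmul_eq_mul]
      _ = (n:ℝ)^2 * (2 ^ P * |p - q|) := by
          rw [Finset.sum_const, Finset.card_univ, Fintype.card_fin, nsmul_eq_mul]; ring
  unfold TVp
  rw [div_sub_div_same, abs_div]
  have h2 : |(2:ℝ)| = 2 := by norm_num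
  rw [h2]
  have hge : (0:ℝ) ≤ (n:ℝ)^2 * (2 ^ P * |p - q|) := by positivity
  calc _ ≤ (n:ℝ)^2 * (2 ^ P * |p - q|) / 2 := by linarith [key]
    _ ≤ (n:ℝ)^2 * (2 ^ P * |p - q|) := by linarith
    _ = (n:ℝ)^2 * 2 ^ P * |p - q| := by ring

private lemma Np_diff (G : SimpleGraph (Fin n)) [DecidableRel G.Adj] {p q P : ℝ}
    (hp : 1 ≤ p) (hpP : p ≤ P) (hq : 1 ≤ q) (hqP : q ≤ P) {x : Fin n → ℝ} (hx : ‖x‖ ≤ 1) :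
    |Np G p x - Np G q x| ≤ (n:ℝ)^2 * 2 ^ P * |p - q| := by
  unfold Np
  rw [← Finset.sum_sub_distrib]
  calc |∑ i : Fin n, ((G.degree i : ℝ) * |x i| ^ p - (G.degree i : ℝ) * |x i| ^ q)|
      ≤ ∑ i : Fin n, |(G.degree i : ℝ) * |x i| ^ p - (G.degree i : ℝ) * |x i| ^ q| :=
        Finset.abs_sum_le_sum_abs _ _
    _ ≤ ∑ _i : Fin n, (n:ℝ) * (2 ^ P * |p - q|) := by
        apply Finset.sum_le_sum; intro i _
        have hb : |x i| ≤ 2 := by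
          have h1 : ‖x i‖ ≤ 1 := (norm_le_pi_norm x i).trans hx
          simp only [Real.norm_eq_abs] at h1; linarith
        have := rpow_diff_le (abs_nonneg (x i)) hb hp hpP hq hqP
        calc |(G.degree i : ℝ) * |x i| ^ p - (G.degree i : ℝ) * |x i| ^ q|
            = (G.degree i : ℝ) * abs (|x i| ^ p - |x i| ^ q) := by
              rw [← mul_sub, abs_mul, abs_of_nonneg (Nat.cast_nonneg _)]
          _ ≤ (n:ℝ) * (2 ^ P * |p - q|) := by
              apply mul_le_mul (deg_le G i) this (abs_nonneg _) (Nat.cast_nonneg _)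
    _ = (n:ℝ)^2 * 2 ^ P * |p - q| := by
        rw [Finset.sum_const, Finset.card_univ, Fintype.card_fin, nsmul_eq_mul]; ring

private lemma Fp_diff (G : SimpleGraph (Fin n)) [DecidableRel G.Adj]
    (hdeg : ∀ i, 0 < G.degree i) {p q P : ℝ}
    (hp : 1 ≤ p) (hpP : p ≤ P) (hq : 1 ≤ q) (hqP : q ≤ P) {x : Fin n → ℝ} (hx : ‖x‖ = 1) :
    |Fp G p x - Fp G q x| ≤ 2 * ((n:ℝ)^2 * 2 ^ P)^2 * |p - q| := by
  set B : ℝ := (n:ℝ)^2 * 2 ^ P with hB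
  have h2P1 : (1:ℝ) ≤ 2 ^ P := Real.one_le_rpow one_le_two (by linarith)
  have hTp0 : 0 ≤ TVp G p x := TVp_nonneg G p x
  have hTq0 : 0 ≤ TVp G q x := TVp_nonneg G q x
  have hTpB : TVp G p x ≤ B := TVp_le G hp hpP hx.le
  have hTqB : TVp G q x ≤ B := TVp_le G hq hqP hx.le
  have hNp1 : 1 ≤ Np G p x := one_le_Np G hdeg hx
  have hNq1 : 1 ≤ Np G q x := one_le_Np G hdeg hx
  have hNpB : Np G p x ≤ B := by
    calc Np G p x ≤ (n:ℝ)^2 := Np_le G (by linarith) hx.le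
      _ ≤ B := by rw [hB]; nlinarith [sq_nonneg (n:ℝ)]
  have hTd : |TVp G p x - TVp G q x| ≤ B * |p - q| := TVp_diff G hp hpP hq hqP hx.le
  have hNd : |Np G p x - Np G q x| ≤ B * |p - q| := Np_diff G hp hpP hq hqP hx.le
  have hkey : |TVp G p x * Np G q x - TVp G q x * Np G p x| ≤ 2 * B^2 * |p - q| := by
    have hid : TVp G p x * Np G q x - TVp G q x * Np G p x
        = TVp G p x * (Np G q x - Np G p x) + Np G p x * (TVp G p x - TVp G q x) := by ring
    rw [hid]
    calc |TVp G p x * (Np G q x - Np G p x) + Np G p x * (TVp G p x - TVp G q x)|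
        ≤ |TVp G p x * (Np G q x - Np G p x)| + |Np G p x * (TVp G p x - TVp G q x)| :=
          abs_add_le _ _
      _ = |TVp G p x| * |Np G q x - Np G p x| + |Np G p x| * |TVp G p x - TVp G q x| := by
          rw [abs_mul, abs_mul]
      _ ≤ B * (B * |p - q|) + B * (B * |p - q|) := by
          have h1 : |TVp G p x| = TVp G p x := abs_of_nonneg hTp0
          have h2 : |Np G p x| = Np G p x := abs_of_nonneg (by linarith)
          rw [h1, h2, abs_sub_comm (Np G q x)]
          have := mul_le_mul hTpB hNd (abs_nonneg _) (by positivity : (0:ℝ) ≤ B)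
          have := mul_le_mul hNpB hTd (abs_nonneg _) (by positivity : (0:ℝ) ≤ B)
          nlinarith [abs_nonneg (Np G p x - Np G q x), abs_nonneg (TVp G p x - TVp G q x)]
      _ = 2 * B^2 * |p - q| := by ring
  have hNpos : 0 < Np G p x * Np G q x := by nlinarith
  have hfrac : Fp G p x - Fp G q x
      = (TVp G p x * Np G q x - TVp G q x * Np G p x) / (Np G p x * Np G q x) := by
    unfold Fp
    rw [div_sub_div _ _ (by linarith : Np G p x ≠ 0) (by linarith : Np G q x ≠ 0)]
    ring
  rw [hfrac, abs_div, abs_of_pos hNpos]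
  calc |TVp G p x * Np G q x - TVp G q x * Np G p x| / (Np G p x * Np G q x)
      ≤ |TVp G p x * Np G q x - TVp G q x * Np G p x| := by
        apply div_le_self (abs_nonneg _)
        nlinarith
    _ ≤ 2 * B^2 * |p - q| := hkey

end Aux2

/-! ### Auxiliary lemmas for the proof -/

section Aux
variable {n : ℕ} (G : SimpleGraph (Fin n)) [DecidableRel G.Adj]

private lemma TVp_smul {p : ℝ} {c : ℝ} (hc : 0 < c) (x : Fin n → ℝ) :
    TVp G p (c • x) = c ^ p * TVp G p x := by
  have hterm : ∀ i j : Fin n, (if G.Adj i j then |(c • x) i - (c • x) j| ^ p else 0)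
      = c ^ p * (if G.Adj i j then |x i - x j| ^ p else 0) := by
    intro i j
    split
    · simp only [Pi.smul_apply, smul_eq_mul]
      rw [← mul_sub, abs_mul, abs_of_pos hc, Real.mul_rpow hc.le (abs_nonneg _)]
    · rw [mul_zero]
  unfold TVp
  simp_rw [hterm, ← Finset.mul_sum]
  ring

private lemma Np_smul {p : ℝ} {c : ℝ} (hc : 0 < c) (x : Fin n → ℝ) :
    Np G p (c • x) = c ^ p * Np G p x := by
  unfold Np
  have hterm : ∀ i : Fin n, (G.degree i : ℝ) * |(c • x) i| ^ p
      = c ^ p * ((G.degree i : ℝ) * |x i| ^ p) := by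
    intro i
    simp only [Pi.smul_apply, smul_eq_mul]
    rw [abs_mul, abs_of_pos hc, Real.mul_rpow hc.le (abs_nonneg _)]
    ring
  simp_rw [hterm, ← Finset.mul_sum]

private lemma Fp_smul {p : ℝ} {c : ℝ} (hc : 0 < c) (x : Fin n → ℝ) :
    Fp G p (c • x) = Fp G p x := by
  unfold Fp
  rw [TVp_smul G hc x, Np_smul G hc x,
    mul_div_mul_left _ _ (ne_of_gt (Real.rpow_pos_of_pos hc p))]

private lemma norm_inv_smul {x : Fin n → ℝ} (hx : x ≠ 0) : ‖(‖x‖⁻¹ • x)‖ = 1 := by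
  have h0 : ‖x‖ ≠ 0 := norm_ne_zero_iff.2 hx
  rw [norm_smul, norm_inv, norm_norm, inv_mul_cancel₀ h0]

private lemma Fp_eq_normalized {p : ℝ} {x : Fin n → ℝ} (hx : x ≠ 0) :
    Fp G p x = Fp G p (‖x‖⁻¹ • x) :=
  (Fp_smul G (inv_pos.2 (norm_pos_iff.2 hx)) x).symm

private lemma Fp_bounds (hdeg : ∀ i, 0 < G.degree i) {p P : ℝ} (hp : 1 ≤ p) (hpP : p ≤ P)
    {x : Fin n → ℝ} (hx : x ≠ 0) :
    0 ≤ Fp G p x ∧ Fp G p x ≤ (n:ℝ)^2 * 2 ^ P := by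
  rw [Fp_eq_normalized G hx]
  set y := ‖x‖⁻¹ • x with hy
  have hny : ‖y‖ = 1 := norm_inv_smul hx
  have hT0 : 0 ≤ TVp G p y := TVp_nonneg G p y
  have hTB : TVp G p y ≤ (n:ℝ)^2 * 2 ^ P := TVp_le G hp hpP hny.le
  have hN1 : 1 ≤ Np G p y := one_le_Np G hdeg hny
  constructor
  · exact div_nonneg hT0 (by linarith)
  · calc Fp G p y ≤ TVp G p y := div_le_self hT0 hN1
      _ ≤ (n:ℝ)^2 * 2 ^ P := hTB

private lemma bddAbove_Fp_image (hdeg : ∀ i, 0 < G.degree i) {p P : ℝ} (hp : 1 ≤ p)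
    (hpP : p ≤ P) {S : Set (Fin n → ℝ)} (hS0 : (0 : Fin n → ℝ) ∉ S) :
    BddAbove (Fp G p '' S) := by
  refine ⟨(n:ℝ)^2 * 2 ^ P, ?_⟩
  rintro r ⟨x, hxS, rfl⟩
  exact (Fp_bounds G hdeg hp hpP (fun h => hS0 (h ▸ hxS))).2

private lemma sSup_Fp_nonneg (hdeg : ∀ i, 0 < G.degree i) {p P : ℝ} (hp : 1 ≤ p)
    (hpP : p ≤ P) {S : Set (Fin n → ℝ)} (hS0 : (0 : Fin n → ℝ) ∉ S) (hSne : S.Nonempty) :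
    0 ≤ sSup (Fp G p '' S) := by
  obtain ⟨x, hxS⟩ := hSne
  have hx : x ≠ 0 := fun h => hS0 (h ▸ hxS)
  calc (0:ℝ) ≤ Fp G p x := (Fp_bounds G hdeg hp hpP hx).1
    _ ≤ sSup (Fp G p '' S) :=
      le_csSup (bddAbove_Fp_image G hdeg hp hpP hS0) ⟨x, hxS, rfl⟩

private lemma sSup_Fp_est (hdeg : ∀ i, 0 < G.degree i) {p q P : ℝ}
    (hp : 1 ≤ p) (hpP : p ≤ P) (hq : 1 ≤ q) (hqP : q ≤ P)
    {S : Set (Fin n → ℝ)} (hS0 : (0 : Fin n → ℝ) ∉ S) (hSne : S.Nonempty) :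
    sSup (Fp G q '' S) ≤ sSup (Fp G p '' S) + 2 * ((n:ℝ)^2 * 2 ^ P)^2 * |p - q| := by
  apply Real.sSup_le
  · rintro r ⟨x, hxS, rfl⟩
    have hx : x ≠ 0 := fun h => hS0 (h ▸ hxS)
    set y := ‖x‖⁻¹ • x with hy
    have hny : ‖y‖ = 1 := norm_inv_smul hx
    have h1 : Fp G q x = Fp G q y := Fp_eq_normalized G hx
    have h2 : Fp G p y = Fp G p x := (Fp_eq_normalized G hx).symm
    have h3 : |Fp G p y - Fp G q y| ≤ 2 * ((n:ℝ)^2 * 2 ^ P)^2 * |p - q| :=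
      Fp_diff G hdeg hp hpP hq hqP hny
    have h4 : Fp G p x ≤ sSup (Fp G p '' S) :=
      le_csSup (bddAbove_Fp_image G hdeg hp hpP hS0) ⟨x, hxS, rfl⟩
    have h5 := abs_le.1 h3
    linarith [h1, h2, h5.1, h5.2]
  · have h6 := sSup_Fp_nonneg G hdeg hp hpP hS0 hSne
    have h7 : (0:ℝ) ≤ 2 * ((n:ℝ)^2 * 2 ^ P)^2 * |p - q| := by positivity
    linarith

private lemma sInf_est (hdeg : ∀ i, 0 < G.degree i) (pred : Set (Fin n → ℝ) → Prop)
    (hpred : ∀ S, pred S → S.Nonempty) {p q P : ℝ}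
    (hp : 1 ≤ p) (hpP : p ≤ P) (hq : 1 ≤ q) (hqP : q ≤ P) :
    sInf {r | ∃ S : Set (Fin n → ℝ), Admissible S ∧ pred S ∧ r = sSup (Fp G q '' S)}
      ≤ sInf {r | ∃ S : Set (Fin n → ℝ), Admissible S ∧ pred S ∧ r = sSup (Fp G p '' S)}
        + 2 * ((n:ℝ)^2 * 2 ^ P)^2 * |p - q| := by
  set L : ℝ := 2 * ((n:ℝ)^2 * 2 ^ P)^2 * |p - q| with hL
  have hL0 : 0 ≤ L := by positivity
  set Rp := {r | ∃ S : Set (Fin n → ℝ), Admissible S ∧ pred S ∧ r = sSup (Fp G p '' S)} with hRp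
  set Rq := {r | ∃ S : Set (Fin n → ℝ), Admissible S ∧ pred S ∧ r = sSup (Fp G q '' S)} with hRq
  by_cases hex : ∃ S : Set (Fin n → ℝ), Admissible S ∧ pred S
  · obtain ⟨S₀, hS₀a, hS₀p⟩ := hex
    have hRpne : Rp.Nonempty := ⟨_, S₀, hS₀a, hS₀p, rfl⟩
    have hRqbb : BddBelow Rq := by
      refine ⟨0, ?_⟩
      rintro r ⟨S, hSa, hSp, rfl⟩
      exact sSup_Fp_nonneg G hdeg hq hqP hSa.2.1 (hpred S hSp)
    have hstep : ∀ r ∈ Rp, sInf Rq - L ≤ r := by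
      rintro r ⟨S, hSa, hSp, rfl⟩
      have h1 : sSup (Fp G q '' S) ∈ Rq := ⟨S, hSa, hSp, rfl⟩
      have h2 : sInf Rq ≤ sSup (Fp G q '' S) := csInf_le hRqbb h1
      have h3 := sSup_Fp_est G hdeg hp hpP hq hqP hSa.2.1 (hpred S hSp)
      linarith
    have := le_csInf hRpne hstep
    linarith
  · have hp' : Rp = ∅ := by
      rw [hRp, Set.eq_empty_iff_forall_notMem]
      rintro r ⟨S, hSa, hSp, _⟩
      exact hex ⟨S, hSa, hSp⟩
    have hq' : Rq = ∅ := by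
      rw [hRq, Set.eq_empty_iff_forall_notMem]
      rintro r ⟨S, hSa, hSp, _⟩
      exact hex ⟨S, hSa, hSp⟩
    rw [hp', hq', Real.sInf_empty]
    linarith

private lemma genNeg_nonempty {S : Set (Fin n → ℝ)} {k : ℕ} (hk1 : 1 ≤ k)
    (h : k ≤ genNeg S) : S.Nonempty := by
  by_contra hne
  have : genNeg S = 0 := by
    unfold genNeg
    rw [if_neg (fun hc => hne hc.1)]
  omega

private lemma genPos_nonempty {S : Set (Fin n → ℝ)} {k : ℕ} (hk1 : 1 ≤ k)
    (h : k ≤ genPos S) : S.Nonempty := by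
  by_contra hne
  have : genPos S = 0 := by
    unfold genPos
    rw [if_neg (fun hc => hne hc.1)]
  omega

private lemma lam_lipschitz (hdeg : ∀ i, 0 < G.degree i)
    (lam : ℝ → ℝ) (pred : Set (Fin n → ℝ) → Prop)
    (hpred : ∀ S, pred S → S.Nonempty)
    (hlam : ∀ q : ℝ, lam q =
      sInf {r | ∃ S : Set (Fin n → ℝ), Admissible S ∧ pred S ∧ r = sSup (Fp G q '' S)})
    (p : ℝ) (hp : p ∈ Set.Ici (1:ℝ)) :
    ∃ K : ℝ≥0, ∃ t ∈ nhdsWithin p (Set.Ici (1 : ℝ)), LipschitzOnWith K lam t := by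
  set P : ℝ := p + 1 with hP
  have hp1 : (1:ℝ) ≤ p := hp
  have hL0 : (0:ℝ) ≤ 2 * ((n:ℝ)^2 * 2 ^ P)^2 := by positivity
  refine ⟨(2 * ((n:ℝ)^2 * 2 ^ P)^2).toNNReal, Set.Ici 1 ∩ Metric.ball p 1, ?_, ?_⟩
  · exact Filter.inter_mem self_mem_nhdsWithin
      (mem_nhdsWithin_of_mem_nhds (Metric.ball_mem_nhds p one_pos))
  · apply LipschitzOnWith.of_dist_le_mul
    intro a ha b hb
    obtain ⟨ha1, ha2⟩ := ha
    obtain ⟨hb1, hb2⟩ := hb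
    have ha1' : (1:ℝ) ≤ a := ha1
    have hb1' : (1:ℝ) ≤ b := hb1
    have haP : a ≤ P := by
      have h := abs_lt.1 (by simpa [Real.dist_eq] using Metric.mem_ball.1 ha2)
      rw [hP]; linarith [h.2]
    have hbP : b ≤ P := by
      have h := abs_lt.1 (by simpa [Real.dist_eq] using Metric.mem_ball.1 hb2)
      rw [hP]; linarith [h.2]
    have est1 := sInf_est G hdeg pred hpred ha1' haP hb1' hbP
    have est2 := sInf_est G hdeg pred hpred hb1' hbP ha1' haP
    rw [← hlam a, ← hlam b] at est1 est2
    rw [abs_sub_comm b a] at est2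
    rw [Real.dist_eq, Real.dist_eq, Real.coe_toNNReal _ hL0, abs_sub_le_iff]
    exact ⟨by linarith, by linarith⟩

end Aux


/-- **Local Lipschitz continuity of `p ↦ λ_k^±(Δ_p)` on `[1,∞)`.** -/
theorem stmt1 {n : ℕ} (G : SimpleGraph (Fin n)) [DecidableRel G.Adj]
    (hdeg : ∀ i, 0 < G.degree i) (k : ℕ) (hk1 : 1 ≤ k) (hkn : k ≤ n) :
    (∀ p ∈ Set.Ici (1 : ℝ), ∃ K : ℝ≥0, ∃ t ∈ nhdsWithin p (Set.Ici (1 : ℝ)),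
        LipschitzOnWith K (fun q : ℝ => lamNeg G q k) t) ∧
    (∀ p ∈ Set.Ici (1 : ℝ), ∃ K : ℝ≥0, ∃ t ∈ nhdsWithin p (Set.Ici (1 : ℝ)),
        LipschitzOnWith K (fun q : ℝ => lamPos G q k) t) := by
  constructor
  · intro p hp
    exact lam_lipschitz G hdeg (fun q => lamNeg G q k) (fun S => k ≤ genNeg S)
      (fun S hS => genNeg_nonempty hk1 hS) (fun q => rfl) p hp
  · intro p hp
    exact lam_lipschitz G hdeg (fun q => lamPos G q k) (fun S => k ≤ genPos S)
      (fun S hS => genPos_nonempty hk1 hS) (fun q => rfl) p hp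
end
end

section
/- For every finite simple graph without isolated vertices, let spec(Δ_p) denote the set of all λ ∈ ℝ for which Δ_p has an eigenpair (λ,x). Then the set-valued map p ↦ spec(Δ_p) is upper semi-continuous on [1,+∞): for every p ≥ 1 and every ε > 0 there exists δ > 0 such that for every p' ≥ 1 with |p'−p| < δ, every λ' ∈ spec(Δ_{p'}) satisfies |λ'−λ| < ε for some λ ∈ spec(Δ_p). -/
open scoped BigOperators Pointwise NNReal Classical

noncomputable section

/-!
Both eigenvalue problems are the equation `Σ_{j ~ i} z_ij = λ deg(i) s_i` with `z_ij` and `s_i`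
subgradients of `|·|^q / q` at `x_i - x_j` and at `x_i`, and the set of `(q, λ, x, z, s)` solving
it is closed for `q ≥ 1`. For sup-normalized `x` all of `λ, z, s` are bounded by `2^(q-1)`. So if
eigenvalues `λ_k` of `Δ_{q_k}` with `q_k → p` stayed `ε` away from `spec(Δ_p)`, a convergent
subsequence of `(λ_k, x_k, z_k, s_k)` would give an eigenpair of `Δ_p` whose eigenvalue is a
limit point of the `λ_k`.
-/

open Filter Topology

/-- `z ∈ ∂(|·|^q / q)(t)` for `q ≥ 1`, in a form that is closed in `(q, t, z)`. -/
def IsPowSubgrad (q t z : ℝ) : Prop := z * t = |t| ^ q ∧ |z| ≤ |t| ^ (q - 1)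

theorem isPowSubgrad_one_iff {t z : ℝ} : IsPowSubgrad 1 t z ↔ z ∈ Sgn t := by
  rw [IsPowSubgrad, Real.rpow_one, sub_self, Real.rpow_zero]
  rcases lt_trichotomy t 0 with ht | rfl | ht
  · simp only [Sgn, ht.not_gt, ht, abs_of_neg ht, if_false, if_true, Set.mem_singleton_iff]
    exact ⟨fun h => mul_right_cancel₀ ht.ne (by linarith [h.1]), by rintro rfl; norm_num⟩
  · simp [Sgn, abs_le]
  · simp only [Sgn, ht, abs_of_pos ht, if_true, Set.mem_singleton_iff]
    exact ⟨fun h => mul_right_cancel₀ ht.ne' (by linarith [h.1]), by rintro rfl; norm_num⟩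

theorem isPowSubgrad_abs_rpow_mul {q : ℝ} (hq : 1 ≤ q) (t : ℝ) :
    IsPowSubgrad q t (|t| ^ (q - 2) * t) := by
  rcases eq_or_ne t 0 with rfl | ht
  · simp [IsPowSubgrad, Real.zero_rpow (by linarith : q ≠ 0), Real.rpow_nonneg le_rfl]
  have ha : |t| ≠ 0 := abs_ne_zero.2 ht
  have h1 : |t| ^ (q - 1) = |t| ^ (q - 2) * |t| := by rw [← Real.rpow_add_one ha]; ring_nf
  have h2 : |t| ^ q = |t| ^ (q - 1) * |t| := by rw [← Real.rpow_add_one ha]; ring_nf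
  constructor
  · rw [h2, h1, mul_assoc, mul_assoc, abs_mul_abs_self]
  · rw [abs_mul, abs_of_nonneg (Real.rpow_nonneg (abs_nonneg t) _), h1]

theorem isPowSubgrad_iff_of_one_lt {q t z : ℝ} (hq : 1 < q) :
    IsPowSubgrad q t z ↔ z = |t| ^ (q - 2) * t := by
  refine ⟨fun h => ?_, fun h => h ▸ isPowSubgrad_abs_rpow_mul hq.le t⟩
  rcases eq_or_ne t 0 with rfl | ht
  · have := h.2
    rw [abs_zero, Real.zero_rpow (by linarith)] at this
    simpa using this
  · exact mul_right_cancel₀ ht (h.1.trans (isPowSubgrad_abs_rpow_mul hq.le t).1.symm)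

namespace IsPowSubgrad

variable {q t z : ℝ}

theorem mul_left (h : IsPowSubgrad q t z) {c : ℝ} (hc : 0 < c) :
    IsPowSubgrad q (c * t) (c ^ (q - 1) * z) := by
  have hcq : c ^ (q - 1) * c = c ^ q := by rw [← Real.rpow_add_one hc.ne']; ring_nf
  have habs : ∀ r : ℝ, |c * t| ^ r = c ^ r * |t| ^ r := fun r => by
    rw [abs_mul, abs_of_pos hc, Real.mul_rpow hc.le (abs_nonneg t)]
  constructor
  · rw [habs, ← hcq, ← h.1]; ring
  · rw [habs, abs_mul, abs_of_pos (Real.rpow_pos_of_pos hc _)]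
    exact mul_le_mul_of_nonneg_left h.2 (Real.rpow_nonneg hc.le _)

theorem abs_le_rpow (h : IsPowSubgrad q t z) (hq : 1 ≤ q) {b : ℝ} (ht : |t| ≤ b) :
    |z| ≤ b ^ (q - 1) :=
  h.2.trans (Real.rpow_le_rpow (abs_nonneg t) ht (sub_nonneg.2 hq))

theorem of_tendsto {ι : Type*} {l : Filter ι} [l.NeBot] {q t z : ι → ℝ} {p T Z : ℝ}
    (hq1 : ∀ k, 1 ≤ q k) (hq : Tendsto q l (𝓝 p)) (ht : Tendsto t l (𝓝 T))
    (hz : Tendsto z l (𝓝 Z)) (h : ∀ k, IsPowSubgrad (q k) (t k) (z k)) :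
    IsPowSubgrad p T Z := by
  have hp : 1 ≤ p := ge_of_tendsto' hq hq1
  constructor
  · exact tendsto_nhds_unique ((hz.mul ht).congr fun k => (h k).1)
      ((Real.continuousAt_rpow _ (Or.inr (by linarith))).tendsto.comp (ht.abs.prodMk_nhds hq))
  by_cases hc : |T| ≠ 0 ∨ 0 < p - 1
  · exact le_of_tendsto_of_tendsto hz.abs
      ((Real.continuousAt_rpow _ hc).tendsto.comp (ht.abs.prodMk_nhds (hq.sub_const 1)))
      (Eventually.of_forall fun k => (h k).2)
  -- At `(T, p) = (0, 1)` the bound `|t| ^ (q - 1)` is discontinuous, but it stays below `1`.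
  push Not at hc
  rw [hc.1, show p - 1 = 0 by linarith, Real.rpow_zero]
  have hsmall : ∀ᶠ k in l, |t k| < 1 := ht.abs.eventually (eventually_lt_nhds (by simp [hc.1]))
  exact le_of_tendsto hz.abs <| hsmall.mono fun k hk =>
    ((h k).abs_le_rpow (hq1 k) hk.le).trans_eq (Real.one_rpow _)

end IsPowSubgrad

section Graph

variable {n : ℕ} (G : SimpleGraph (Fin n)) [DecidableRel G.Adj]

theorem sum_ite_adj_eq_sum_neighborFinset (i : Fin n) (f : Fin n → ℝ) :
    (∑ j : Fin n, if G.Adj i j then f j else 0) = ∑ j ∈ G.neighborFinset i, f j := by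
  rw [G.neighborFinset_eq_filter, Finset.sum_filter]

/-- The subgradient condition on `z` is imposed on non-edges too: this keeps `z` bounded and does
not affect the equation. -/
def IsEigenCertificate (q lam : ℝ) (x : Fin n → ℝ) (z : Fin n → Fin n → ℝ) (s : Fin n → ℝ) :
    Prop :=
  (∀ i j, IsPowSubgrad q (x i - x j) (z i j)) ∧ (∀ i j, G.Adj i j → z i j = -z j i) ∧
    (∀ i, IsPowSubgrad q (x i) (s i)) ∧
    ∀ i, ∑ j ∈ G.neighborFinset i, z i j = lam * G.degree i * s i

variable {G}

theorem IsEigenpair.exists_certificate {q lam : ℝ} {x : Fin n → ℝ} (h : IsEigenpair G q lam x) :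
    ∃ z s, IsEigenCertificate G q lam x z s := by
  rcases h with ⟨rfl, -, z, hz, hanti, hsum⟩ | ⟨hq, -, hsum⟩
  · choose s hs hsum using hsum
    dsimp only at hsum
    refine ⟨fun i j => if G.Adj i j then z i j else |x i - x j| ^ ((1 : ℝ) - 2) * (x i - x j),
      s, fun i j => ?_, fun i j hij => ?_, fun i => isPowSubgrad_one_iff.2 (hs i), fun i => ?_⟩
    · dsimp only
      split_ifs with hij
      · exact isPowSubgrad_one_iff.2 (hz i j hij)
      · exact isPowSubgrad_abs_rpow_mul le_rfl _
    · simp only [hij, hij.symm, if_true, hanti i j hij]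
    · rw [hsum i, sum_ite_adj_eq_sum_neighborFinset]
      exact Finset.sum_congr rfl fun j hj => if_pos ((G.mem_neighborFinset i j).1 hj)
  · refine ⟨fun i j => |x i - x j| ^ (q - 2) * (x i - x j), fun i => |x i| ^ (q - 2) * x i,
      fun i j => isPowSubgrad_abs_rpow_mul hq.le _, fun i j _ => ?_,
      fun i => isPowSubgrad_abs_rpow_mul hq.le _, fun i => ?_⟩
    · dsimp only
      rw [abs_sub_comm (x j)]; ring
    · rw [← sum_ite_adj_eq_sum_neighborFinset, hsum i]

namespace IsEigenCertificate

variable {q lam : ℝ} {x : Fin n → ℝ} {z : Fin n → Fin n → ℝ} {s : Fin n → ℝ}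

theorem isEigenpair (h : IsEigenCertificate G q lam x z s) (hq : 1 ≤ q) (hx : x ≠ 0) :
    IsEigenpair G q lam x := by
  obtain ⟨hz, hanti, hs, hsum⟩ := h
  rcases hq.eq_or_lt with rfl | hq
  · refine Or.inl ⟨rfl, hx, z, fun i j _ => isPowSubgrad_one_iff.1 (hz i j), hanti,
      fun i => ⟨s i, isPowSubgrad_one_iff.1 (hs i), ?_⟩⟩
    rw [sum_ite_adj_eq_sum_neighborFinset, hsum i]
  · refine Or.inr ⟨hq, hx, fun i => ?_⟩
    simp only [← (isPowSubgrad_iff_of_one_lt hq).1 (hz _ _),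
      ← (isPowSubgrad_iff_of_one_lt hq).1 (hs _), sum_ite_adj_eq_sum_neighborFinset, hsum,
      mul_assoc]

theorem smul (h : IsEigenCertificate G q lam x z s) {c : ℝ} (hc : 0 < c) :
    IsEigenCertificate G q lam (c • x) (c ^ (q - 1) • z) (c ^ (q - 1) • s) := by
  obtain ⟨hz, hanti, hs, hsum⟩ := h
  refine ⟨fun i j => ?_, fun i j hij => ?_, fun i => (hs i).mul_left hc, fun i => ?_⟩
  · simpa [mul_sub] using (hz i j).mul_left hc
  · simp [hanti i j hij]
  · simp only [Pi.smul_apply, smul_eq_mul, ← Finset.mul_sum, hsum]; ring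

theorem abs_edge_le (h : IsEigenCertificate G q lam x z s) (hq : 1 ≤ q) (hx : ‖x‖ ≤ 1)
    (i j : Fin n) : |z i j| ≤ 2 ^ (q - 1) := by
  have hxi : ∀ i, |x i| ≤ 1 := fun i => (norm_le_pi_norm x i).trans hx
  exact (h.1 i j).abs_le_rpow hq <| (abs_sub _ _).trans (by linarith [hxi i, hxi j])

theorem abs_vertex_le (h : IsEigenCertificate G q lam x z s) (hq : 1 ≤ q) (hx : ‖x‖ ≤ 1)
    (i : Fin n) : |s i| ≤ 1 :=
  ((h.2.2.1 i).abs_le_rpow hq ((norm_le_pi_norm x i).trans hx)).trans_eq (Real.one_rpow _)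

theorem abs_eigenvalue_le (h : IsEigenCertificate G q lam x z s) (hdeg : ∀ i, 0 < G.degree i)
    (hq : 1 ≤ q) (hx : ‖x‖ = 1) : |lam| ≤ 2 ^ (q - 1) := by
  obtain ⟨i₀, -⟩ := Function.ne_iff.1 (norm_ne_zero_iff.1 (hx.trans_ne one_ne_zero))
  have : Nonempty (Fin n) := ⟨i₀⟩
  obtain ⟨i, hi : |x i| = ‖x‖⟩ := (IsGreatest.pi_norm x).1
  rw [hx] at hi
  have hsi : |s i| = 1 := by
    simpa [hi, abs_mul] using congrArg abs (h.2.2.1 i).1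
  have hdi : (0 : ℝ) < G.degree i := mod_cast hdeg i
  have hsum : G.degree i * |lam| ≤ G.degree i * 2 ^ (q - 1) :=
    calc (G.degree i : ℝ) * |lam| = |∑ j ∈ G.neighborFinset i, z i j| := by
          rw [h.2.2.2 i, abs_mul, abs_mul, hsi, Nat.abs_cast]; ring
      _ ≤ ∑ j ∈ G.neighborFinset i, |z i j| := Finset.abs_sum_le_sum_abs _ _
      _ ≤ (G.neighborFinset i).card • 2 ^ (q - 1) :=
          Finset.sum_le_card_nsmul _ _ _ fun j _ => h.abs_edge_le hq hx.le i j
      _ = G.degree i * 2 ^ (q - 1) := by rw [G.card_neighborFinset_eq_degree, nsmul_eq_mul]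
  exact le_of_mul_le_mul_left hsum hdi

theorem norm_le (h : IsEigenCertificate G q lam x z s) (hdeg : ∀ i, 0 < G.degree i)
    (hq : 1 ≤ q) (hx : ‖x‖ = 1) : ‖(lam, x, z, s)‖ ≤ 2 ^ (q - 1) := by
  have hone : (1 : ℝ) ≤ 2 ^ (q - 1) := Real.one_le_rpow one_le_two (sub_nonneg.2 hq)
  have hpos : (0 : ℝ) ≤ 2 ^ (q - 1) := zero_le_one.trans hone
  simp only [norm_prod_le_iff, Real.norm_eq_abs, pi_norm_le_iff_of_nonneg hpos]
  exact ⟨h.abs_eigenvalue_le hdeg hq hx, fun i => (norm_le_pi_norm x i).trans (hx.trans_le hone),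
    h.abs_edge_le hq hx.le, fun i => (h.abs_vertex_le hq hx.le i).trans hone⟩

theorem of_tendsto {ι : Type*} {l : Filter ι} [l.NeBot] {q lam : ι → ℝ} {x : ι → Fin n → ℝ}
    {z : ι → Fin n → Fin n → ℝ} {s : ι → Fin n → ℝ} {p L : ℝ} {X : Fin n → ℝ}
    {Z : Fin n → Fin n → ℝ} {S : Fin n → ℝ} (hq1 : ∀ k, 1 ≤ q k) (hq : Tendsto q l (𝓝 p))
    (hlam : Tendsto lam l (𝓝 L)) (hx : Tendsto x l (𝓝 X)) (hz : Tendsto z l (𝓝 Z))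
    (hs : Tendsto s l (𝓝 S)) (h : ∀ k, IsEigenCertificate G (q k) (lam k) (x k) (z k) (s k)) :
    IsEigenCertificate G p L X Z S := by
  have hx' := tendsto_pi_nhds.1 hx
  have hs' := tendsto_pi_nhds.1 hs
  have hz' : ∀ i j, Tendsto (fun k => z k i j) l (𝓝 (Z i j)) := fun i j =>
    tendsto_pi_nhds.1 (tendsto_pi_nhds.1 hz i) j
  refine ⟨fun i j => ?_, fun i j hij => ?_, fun i => ?_, fun i => ?_⟩
  · exact .of_tendsto hq1 hq ((hx' i).sub (hx' j)) (hz' i j) fun k => (h k).1 i j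
  · exact tendsto_nhds_unique (hz' i j) ((hz' j i).neg.congr fun k => ((h k).2.1 i j hij).symm)
  · exact .of_tendsto hq1 hq (hx' i) (hs' i) fun k => (h k).2.2.1 i
  · exact tendsto_nhds_unique (tendsto_finsetSum _ fun j _ => hz' i j)
      (((hlam.mul_const _).mul (hs' i)).congr fun k => ((h k).2.2.2 i).symm)

end IsEigenCertificate

theorem IsEigenpair.exists_normalized_certificate {q lam : ℝ} {x : Fin n → ℝ}
    (h : IsEigenpair G q lam x) : ∃ x' z s, ‖x'‖ = 1 ∧ IsEigenCertificate G q lam x' z s := by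
  obtain ⟨z, s, hc⟩ := h.exists_certificate
  have hx : 0 < ‖x‖ := norm_pos_iff.2 (h.elim (·.2.1) (·.2.1))
  exact ⟨‖x‖⁻¹ • x, _, _, by rw [norm_smul, norm_inv, norm_norm, inv_mul_cancel₀ hx.ne'],
    hc.smul (inv_pos.2 hx)⟩

theorem exists_isEigenpair_mapClusterPt (hdeg : ∀ i, 0 < G.degree i) {q lam : ℕ → ℝ} {p : ℝ}
    (hq1 : ∀ k, 1 ≤ q k) (hq : Tendsto q atTop (𝓝 p))
    (heig : ∀ k, ∃ x, IsEigenpair G (q k) (lam k) x) :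
    ∃ L, (∃ x, IsEigenpair G p L x) ∧ MapClusterPt L atTop lam := by
  choose x z s hx h using fun k => (heig k).choose_spec.exists_normalized_certificate
  have hbdd : ∀ᶠ k in atTop, (lam k, x k, z k, s k) ∈ Metric.closedBall 0 (2 ^ p) := by
    filter_upwards [hq.eventually (eventually_le_nhds (lt_add_one p))] with k hk
    rw [mem_closedBall_zero_iff]
    exact ((h k).norm_le hdeg (hq1 k) (hx k)).trans
      (Real.rpow_le_rpow_of_exponent_le one_le_two (by linarith))
  obtain ⟨⟨L, X, Z, S⟩, -, φ, hφ, hlim⟩ :=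
    tendsto_subseq_of_frequently_bounded Metric.isBounded_closedBall hbdd.frequently
  have hX : ‖X‖ = 1 :=
    tendsto_nhds_unique hlim.snd_nhds.fst_nhds.norm (by simp [hx])
  have hcert : IsEigenCertificate G p L X Z S :=
    .of_tendsto (fun k => hq1 (φ k)) (hq.comp hφ.tendsto_atTop) hlim.fst_nhds
      hlim.snd_nhds.fst_nhds hlim.snd_nhds.snd_nhds.fst_nhds hlim.snd_nhds.snd_nhds.snd_nhds
      fun k => h (φ k)
  exact ⟨L, ⟨X, hcert.isEigenpair (ge_of_tendsto' hq hq1) (norm_ne_zero_iff.1 (by simp [hX]))⟩,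
    .of_comp hφ.tendsto_atTop hlim.fst_nhds.mapClusterPt⟩

end Graph

theorem stmt10_general {n : ℕ} (G : SimpleGraph (Fin n)) [DecidableRel G.Adj]
    (hdeg : ∀ i, 0 < G.degree i) (p : ℝ) (ε : ℝ) (hε : 0 < ε) :
    ∃ δ : ℝ, 0 < δ ∧ ∀ p' : ℝ, 1 ≤ p' → |p' - p| < δ →
      ∀ lam' : ℝ, (∃ x : Fin n → ℝ, IsEigenpair G p' lam' x) →
        ∃ lam : ℝ, (∃ x : Fin n → ℝ, IsEigenpair G p lam x) ∧ |lam' - lam| < ε := by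
  by_contra! hfar
  choose q hq1 hqp lam heig hlam using fun k : ℕ => hfar (1 / (k + 1)) Nat.one_div_pos_of_nat
  have hq : Tendsto q atTop (𝓝 p) := tendsto_iff_dist_tendsto_zero.2 <| squeeze_zero
    (fun _ => dist_nonneg) (fun k => (hqp k).le) tendsto_one_div_add_atTop_nhds_zero_nat
  obtain ⟨L, hL, hcl⟩ := exists_isEigenpair_mapClusterPt hdeg hq1 hq heig
  obtain ⟨k, hk⟩ := (hcl.frequently (Metric.ball_mem_nhds L hε)).exists
  exact (hlam k L hL).not_gt hk

/-- **Upper semi-continuity of `p ↦ spec(Δ_p)` on `[1,∞)`.** -/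
theorem stmt10 {n : ℕ} (G : SimpleGraph (Fin n)) [DecidableRel G.Adj]
    (hdeg : ∀ i, 0 < G.degree i) (p : ℝ) (hp : 1 ≤ p) (ε : ℝ) (hε : 0 < ε) :
    ∃ δ : ℝ, 0 < δ ∧ ∀ p' : ℝ, 1 ≤ p' → |p' - p| < δ →
      ∀ lam' : ℝ, (∃ x : Fin n → ℝ, IsEigenpair G p' lam' x) →
        ∃ lam : ℝ, (∃ x : Fin n → ℝ, IsEigenpair G p lam x) ∧ |lam' - lam| < ε :=
  stmt10_general G hdeg p ε hε
end
end

section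
/- Let G=(V,E) be a finite simple graph on V={1,…,n} and x ∈ ℝ^n, and set v₀ = Σ_{{i,j}∈E with x_i > x_j} (e_i − e_j), where e_1,…,e_n is the standard basis of ℝ^n. Then: (a) the set Δ_1x := { (Σ_{j : {i,j}∈E} z_{ij})_{i∈V} : z_{ij} ∈ Sgn(x_i−x_j) and z_{ij} = −z_{ji} for every edge {i,j}∈E } equals the Minkowski sum {v₀} + Σ_{{i,j}∈E with x_i = x_j} [e_i−e_j, e_j−e_i] of the single point v₀ and the segments [e_i−e_j, e_j−e_i] over the edges on which x takes equal values (so Δ_1x is a zonotope); (b) Δ_p x → v₀ as p → 1⁺, where (Δ_p x)_i = Σ_{j : {i,j}∈E} |x_i−x_j|^{p−2}(x_i−x_j) with the convention |t|^{p−2}t = 0 when t=0. -/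
open scoped BigOperators Pointwise NNReal Classical

noncomputable section

/-! ### Auxiliary lemmas for `stmt11` -/

private lemma seg_mem_iff {n : ℕ} (a v : Fin n → ℝ) :
    v ∈ segment ℝ a (-a) ↔ ∃ t ∈ Set.Icc (-1:ℝ) 1, v = t • a := by
  rw [segment_eq_image]
  constructor
  · rintro ⟨θ, hθ, rfl⟩
    refine ⟨1 - 2*θ, ⟨by linarith [hθ.1, hθ.2], by linarith [hθ.1, hθ.2]⟩, ?_⟩
    show (1 - θ) • a + θ • -a = _
    rw [smul_neg, ← neg_smul, ← add_smul]; congr 1; ring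
  · rintro ⟨t, ht, rfl⟩
    refine ⟨(1 - t)/2, ⟨by linarith [ht.1, ht.2], by linarith [ht.1, ht.2]⟩, ?_⟩
    show (1 - (1-t)/2) • a + ((1-t)/2) • -a = _
    rw [smul_neg, ← neg_smul, ← add_smul]; congr 1; ring

private lemma v0_apply {n : ℕ} (G : SimpleGraph (Fin n)) [DecidableRel G.Adj] (x : Fin n → ℝ)
    (v₀ : Fin n → ℝ)
    (hv₀ : v₀ = ∑ i : Fin n, ∑ j : Fin n,
      if G.Adj i j ∧ x j < x i then (Pi.single i 1 - Pi.single j 1 : Fin n → ℝ) else 0)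
    (i : Fin n) :
    v₀ i = ∑ j : Fin n, ((if G.Adj i j ∧ x j < x i then (1:ℝ) else 0)
      - (if G.Adj i j ∧ x i < x j then 1 else 0)) := by
  subst hv₀
  simp only [Finset.sum_apply, Pi.sub_apply, Pi.single_apply,
    apply_ite (fun f : Fin n → ℝ => f i), Pi.zero_apply]
  have h1 : ∀ k j : Fin n, (if G.Adj k j ∧ x j < x k then
        (if i = k then (1:ℝ) else 0) - (if i = j then 1 else 0) else 0)
      = (if i = k then (if G.Adj k j ∧ x j < x k then (1:ℝ) else 0) else 0)
        - (if i = j then (if G.Adj k j ∧ x j < x k then (1:ℝ) else 0) else 0) := by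
    intro k j; split_ifs <;> simp
  simp only [h1, Finset.sum_sub_distrib]
  rw [Finset.sum_comm]
  simp only [Finset.sum_ite_eq, Finset.mem_univ, if_true]
  have h2 : ∀ j : Fin n, G.Adj j i ↔ G.Adj i j := fun j => G.adj_comm j i
  simp only [h2]

private lemma zon_sum_apply {n : ℕ} (G : SimpleGraph (Fin n)) [DecidableRel G.Adj]
    (x : Fin n → ℝ) (z : Fin n → Fin n → ℝ)
    (hanti : ∀ i j, G.Adj i j → z i j = - z j i) (i : Fin n) :
    (∑ e ∈ Finset.univ.filter
        (fun e : Fin n × Fin n => G.Adj e.1 e.2 ∧ x e.1 = x e.2 ∧ e.1 < e.2),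
      z e.1 e.2 * ((Pi.single e.1 1 - Pi.single e.2 1 : Fin n → ℝ) i))
    = ∑ j : Fin n, if G.Adj i j ∧ x i = x j then z i j else 0 := by
  rw [Finset.sum_filter, Fintype.sum_prod_type]
  simp only [Pi.sub_apply, Pi.single_apply]
  have h1 : ∀ a b : Fin n, (if G.Adj a b ∧ x a = x b ∧ a < b then
        z a b * ((if i = a then (1:ℝ) else 0) - (if i = b then 1 else 0)) else 0)
      = (if i = a then (if G.Adj a b ∧ x a = x b ∧ a < b then z a b else 0) else 0)
        - (if i = b then (if G.Adj a b ∧ x a = x b ∧ a < b then z a b else 0) else 0) := by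
    intro a b; split_ifs <;> simp_all
  simp only [h1, Finset.sum_sub_distrib]
  rw [Finset.sum_comm]
  simp only [Finset.sum_ite_eq, Finset.mem_univ, if_true]
  rw [← Finset.sum_sub_distrib]
  apply Finset.sum_congr rfl
  intro j _
  rcases lt_trichotomy i j with h|h|h
  · have h' : ¬ (j < i) := h.asymm
    simp only [h, and_true, h', and_false, if_false, sub_zero]
  · subst h
    simp [SimpleGraph.irrefl]
  · have h' : ¬ (i < j) := h.asymm
    simp only [h', and_false, if_false, zero_sub]
    by_cases ha : G.Adj i j
    · have ha' : G.Adj j i := ha.symm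
      have hx : (x j = x i) ↔ (x i = x j) := eq_comm
      simp only [ha, ha', true_and, hx, h, and_true, hanti j i ha', neg_neg]
      split_ifs <;> simp
    · have ha' : ¬ G.Adj j i := fun h' => ha h'.symm
      simp [ha, ha']

private lemma stmt11_key {n : ℕ} (G : SimpleGraph (Fin n)) [DecidableRel G.Adj]
    (x : Fin n → ℝ) (v₀ : Fin n → ℝ)
    (hv₀ : v₀ = ∑ i : Fin n, ∑ j : Fin n,
      if G.Adj i j ∧ x j < x i then (Pi.single i 1 - Pi.single j 1 : Fin n → ℝ) else 0)
    (z : Fin n → Fin n → ℝ)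
    (hpos : ∀ i j, G.Adj i j → x j < x i → z i j = 1)
    (hneg : ∀ i j, G.Adj i j → x i < x j → z i j = -1)
    (hanti : ∀ i j, G.Adj i j → z i j = - z j i) :
    (fun i => ∑ j : Fin n, if G.Adj i j then z i j else 0)
      = v₀ + ∑ e ∈ Finset.univ.filter
          (fun e : Fin n × Fin n => G.Adj e.1 e.2 ∧ x e.1 = x e.2 ∧ e.1 < e.2),
        (z e.1 e.2) • (Pi.single e.1 1 - Pi.single e.2 1 : Fin n → ℝ) := by
  funext i
  have hsplit : ∀ j, (if G.Adj i j then z i j else 0)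
      = ((if G.Adj i j ∧ x j < x i then (1:ℝ) else 0)
          - (if G.Adj i j ∧ x i < x j then 1 else 0))
        + (if G.Adj i j ∧ x i = x j then z i j else 0) := by
    intro j
    by_cases ha : G.Adj i j
    · rcases lt_trichotomy (x j) (x i) with h|h|h
      · simp [ha, h, h.asymm, h.ne', hpos i j ha h]
      · simp [ha, h, lt_irrefl]
      · simp [ha, h, h.asymm, h.ne, hneg i j ha h]
    · simp [ha]
  calc (∑ j : Fin n, if G.Adj i j then z i j else 0)
      = (∑ j : Fin n, ((if G.Adj i j ∧ x j < x i then (1:ℝ) else 0)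
          - (if G.Adj i j ∧ x i < x j then 1 else 0)))
        + ∑ j : Fin n, (if G.Adj i j ∧ x i = x j then z i j else 0) := by
        rw [← Finset.sum_add_distrib]; exact Finset.sum_congr rfl fun j _ => hsplit j
    _ = v₀ i + ∑ e ∈ Finset.univ.filter
          (fun e : Fin n × Fin n => G.Adj e.1 e.2 ∧ x e.1 = x e.2 ∧ e.1 < e.2),
        z e.1 e.2 * ((Pi.single e.1 1 - Pi.single e.2 1 : Fin n → ℝ) i) := by
        rw [v0_apply G x v₀ hv₀ i, zon_sum_apply G x z hanti i]
    _ = _ := by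
        simp [Finset.sum_apply, Pi.add_apply]

/-- **`Δ_1 x` is a zonotope, and `Δ_p x → v₀` as `p → 1⁺`.** -/
theorem stmt11 {n : ℕ} (G : SimpleGraph (Fin n)) [DecidableRel G.Adj] (x : Fin n → ℝ)
    (v₀ : Fin n → ℝ)
    (hv₀ : v₀ = ∑ i : Fin n, ∑ j : Fin n,
      if G.Adj i j ∧ x j < x i then (Pi.single i 1 - Pi.single j 1 : Fin n → ℝ) else 0) :
    Delta1Set G x =
      ({v₀} : Set (Fin n → ℝ)) +
        ∑ e ∈ Finset.univ.filter
            (fun e : Fin n × Fin n => G.Adj e.1 e.2 ∧ x e.1 = x e.2 ∧ e.1 < e.2),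
          segment ℝ ((Pi.single e.1 1 - Pi.single e.2 1 : Fin n → ℝ))
            ((Pi.single e.2 1 - Pi.single e.1 1 : Fin n → ℝ)) ∧
    Filter.Tendsto (fun p : ℝ => DeltaP G p x) (nhdsWithin 1 (Set.Ioi 1)) (nhds v₀) := by
  classical
  set F := Finset.univ.filter
      (fun e : Fin n × Fin n => G.Adj e.1 e.2 ∧ x e.1 = x e.2 ∧ e.1 < e.2) with hF
  have hsegeq : ∀ e : Fin n × Fin n,
      segment ℝ ((Pi.single e.1 1 - Pi.single e.2 1 : Fin n → ℝ))
        ((Pi.single e.2 1 - Pi.single e.1 1 : Fin n → ℝ))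
      = segment ℝ ((Pi.single e.1 1 - Pi.single e.2 1 : Fin n → ℝ))
        (-(Pi.single e.1 1 - Pi.single e.2 1 : Fin n → ℝ)) := by
    intro e; rw [neg_sub]
  constructor
  · -- part (a)
    ext v
    constructor
    · rintro ⟨z, hz1, hz2, rfl⟩
      have hpos : ∀ i j, G.Adj i j → x j < x i → z i j = 1 := by
        intro i j ha h
        have := hz1 i j ha
        rw [Sgn, if_pos (by linarith : (0:ℝ) < x i - x j)] at this
        simpa using this
      have hneg : ∀ i j, G.Adj i j → x i < x j → z i j = -1 := by
        intro i j ha h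
        have := hz1 i j ha
        rw [Sgn, if_neg (by linarith : ¬ (0:ℝ) < x i - x j),
          if_pos (by linarith : x i - x j < 0)] at this
        simpa using this
      rw [Set.mem_add]
      refine ⟨v₀, rfl, ∑ e ∈ F, (z e.1 e.2) • (Pi.single e.1 1 - Pi.single e.2 1 : Fin n → ℝ),
        ?_, ?_⟩
      · rw [Set.mem_finset_sum]
        refine ⟨fun e => (z e.1 e.2) • (Pi.single e.1 1 - Pi.single e.2 1 : Fin n → ℝ),
          fun {e} he => ?_, rfl⟩
        rw [hF, Finset.mem_filter] at he
        obtain ⟨-, ha, hx, -⟩ := he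
        rw [hsegeq e, seg_mem_iff]
        refine ⟨z e.1 e.2, ?_, rfl⟩
        have := hz1 e.1 e.2 ha
        rw [Sgn, sub_eq_zero_of_eq hx] at this
        simpa using this
      · exact (stmt11_key G x v₀ hv₀ z hpos hneg hz2).symm
    · rintro ⟨a, ha, b, hb, rfl⟩
      rw [show a = v₀ from ha]
      rw [Set.mem_finset_sum] at hb
      obtain ⟨g, hg, hgsum⟩ := hb
      have hgt : ∀ e ∈ F, ∃ t ∈ Set.Icc (-1:ℝ) 1,
          g e = t • (Pi.single e.1 1 - Pi.single e.2 1 : Fin n → ℝ) := by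
        intro e he
        have := hg he
        rw [hsegeq e, seg_mem_iff] at this
        exact this
      choose! t ht1 ht2 using hgt
      set z : Fin n → Fin n → ℝ := fun i j =>
        if x j < x i then 1 else if x i < x j then -1 else
          if i < j then t (i, j) else if j < i then -(t (j, i)) else 0 with hz
      have hpos : ∀ i j, G.Adj i j → x j < x i → z i j = 1 := by
        intro i j _ h; simp [hz, h]
      have hneg : ∀ i j, G.Adj i j → x i < x j → z i j = -1 := by
        intro i j _ h; simp [hz, h, h.asymm]
      have hmemF : ∀ i j, G.Adj i j → x i = x j → i < j → (i, j) ∈ F := by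
        intro i j ha hx hij
        rw [hF, Finset.mem_filter]
        exact ⟨Finset.mem_univ _, ha, hx, hij⟩
      have hanti : ∀ i j, G.Adj i j → z i j = - z j i := by
        intro i j ha
        rcases lt_trichotomy (x j) (x i) with h|h|h
        · simp [hz, h, h.asymm]
        · rcases lt_trichotomy i j with hij|hij|hij
          · simp [hz, h, lt_irrefl, hij, hij.asymm]
          · exact absurd hij (G.ne_of_adj ha)
          · simp [hz, h, lt_irrefl, hij, hij.asymm]
        · simp [hz, h, h.asymm]
      refine ⟨z, ?_, hanti, ?_⟩
      · intro i j ha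
        rcases lt_trichotomy (x j) (x i) with h|h|h
        · rw [Sgn, if_pos (by linarith : (0:ℝ) < x i - x j), hpos i j ha h]
          exact rfl
        · have hx : x i = x j := h.symm
          rw [Sgn, if_neg (by linarith : ¬ (0:ℝ) < x i - x j),
            if_neg (by linarith : ¬ x i - x j < 0)]
          rcases lt_trichotomy i j with hij|hij|hij
          · have : z i j = t (i, j) := by simp [hz, hx, lt_irrefl, hij]
            rw [this]
            exact ht1 (i, j) (hmemF i j ha hx hij)
          · exact absurd hij (G.ne_of_adj ha)
          · have : z i j = -(t (j, i)) := by simp [hz, hx, lt_irrefl, hij, hij.asymm]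
            rw [this]
            have := ht1 (j, i) (hmemF j i ha.symm hx.symm hij)
            exact ⟨by linarith [this.2], by linarith [this.1]⟩
        · rw [Sgn, if_neg (by linarith : ¬ (0:ℝ) < x i - x j),
            if_pos (by linarith : x i - x j < 0), hneg i j ha h]
          exact rfl
      · rw [stmt11_key G x v₀ hv₀ z hpos hneg hanti, ← hgsum]
        show v₀ + _ = v₀ + _
        congr 1
        apply Finset.sum_congr rfl
        intro e he
        rw [hF, Finset.mem_filter] at he
        have hze : z e.1 e.2 = t e := by
          simp [hz, he.2.2.1, lt_irrefl, he.2.2.2]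
        rw [hze, ← ht2 e (by rw [hF, Finset.mem_filter]; exact he)]
  · -- part (b)
    rw [tendsto_pi_nhds]
    intro i
    have hv : v₀ i = ∑ j : Fin n, (if G.Adj i j then
        (if x j < x i then (1:ℝ) else if x i < x j then -1 else 0) else 0) := by
      rw [v0_apply G x v₀ hv₀ i]
      apply Finset.sum_congr rfl
      intro j _
      by_cases ha : G.Adj i j
      · rcases lt_trichotomy (x j) (x i) with h|h|h
        · simp [ha, h, h.asymm]
        · simp [ha, h, lt_irrefl]
        · simp [ha, h, h.asymm]
      · simp [ha]
    rw [hv]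
    have : ∀ p : ℝ, DeltaP G p x i
        = ∑ j : Fin n, (if G.Adj i j then |x i - x j| ^ (p - 2) * (x i - x j) else 0) := by
      intro p; rfl
    simp only [this]
    apply tendsto_finset_sum
    intro j _
    by_cases ha : G.Adj i j
    · simp only [ha, if_true]
      rcases lt_trichotomy (x j) (x i) with h|h|h
      · have ht : (0:ℝ) < x i - x j := by linarith
        rw [if_pos h]
        have hlim : Filter.Tendsto (fun p : ℝ => |x i - x j| ^ (p - 2) * (x i - x j))
            (nhds 1) (nhds (|x i - x j| ^ ((1:ℝ) - 2) * (x i - x j))) := by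
          exact (((Real.continuousAt_const_rpow (abs_ne_zero.mpr (by linarith) : |x i - x j| ≠ 0)).comp
            ((continuous_id.sub continuous_const).continuousAt)).mul
            continuousAt_const)
        have hval : |x i - x j| ^ ((1:ℝ) - 2) * (x i - x j) = 1 := by
          rw [show ((1:ℝ) - 2) = -1 by norm_num, Real.rpow_neg_one, abs_of_pos ht]
          exact inv_mul_cancel₀ (ne_of_gt ht)
        rw [hval] at hlim
        exact hlim.mono_left nhdsWithin_le_nhds
      · have ht : x i - x j = 0 := by linarith
        rw [if_neg (by linarith), if_neg (by linarith)]
        simp only [ht, mul_zero]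
        exact tendsto_const_nhds
      · have ht : x i - x j < 0 := by linarith
        rw [if_neg h.asymm, if_pos h]
        have hlim : Filter.Tendsto (fun p : ℝ => |x i - x j| ^ (p - 2) * (x i - x j))
            (nhds 1) (nhds (|x i - x j| ^ ((1:ℝ) - 2) * (x i - x j))) := by
          exact (((Real.continuousAt_const_rpow (abs_ne_zero.mpr (by linarith) : |x i - x j| ≠ 0)).comp
            ((continuous_id.sub continuous_const).continuousAt)).mul
            continuousAt_const)
        have hval : |x i - x j| ^ ((1:ℝ) - 2) * (x i - x j) = -1 := by
          rw [show ((1:ℝ) - 2) = -1 by norm_num, Real.rpow_neg_one, abs_of_neg ht,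
            show -(x i - x j) = x j - x i by ring, inv_mul_eq_div,
            div_eq_iff (by linarith : x j - x i ≠ 0)]
          ring
        rw [hval] at hlim
        exact hlim.mono_left nhdsWithin_le_nhds
    · simp only [ha, if_false]
      exact tendsto_const_nhds
end
end

section
/- Let G be a finite simple graph without isolated vertices. If (p_m) is a sequence of reals with p_m > 1 and p_m → 1, and for each m, λ_m is an eigenvalue of Δ_{p_m} with λ_m → λ, then λ is an eigenvalue of Δ_1. -/
open scoped BigOperators Pointwise NNReal Classical

noncomputable section

/-
As `p → 1⁺` the map `t ↦ |t|^(p-2) t` converges to the set-valued sign: to `±1` away from `0`,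
while near `0` it stays in `[-1, 1]`. Normalised eigenvectors of `Δ_{p_m}`, together with the
values of this map on their entries and on their edge differences, form a bounded sequence; along
a convergent subsequence the eigenvalue equations pass to the limit, and the limiting edge values
and entry values are the `z_{ij}` and the elements of `Sgn(x_i)` required for an eigenpair of `Δ_1`.
-/

open Filter Topology

def sgnRpow (q t : ℝ) : ℝ := |t| ^ (q - 2) * t

lemma sgnRpow_neg (q t : ℝ) : sgnRpow q (-t) = -sgnRpow q t := by
  simp only [sgnRpow, abs_neg, mul_neg]

lemma sgnRpow_of_pos {q t : ℝ} (ht : 0 < t) : sgnRpow q t = t ^ (q - 1) := by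
  rw [sgnRpow, abs_of_pos ht, show q - 1 = (q - 2) + 1 by ring, Real.rpow_add_one ht.ne']

lemma abs_sgnRpow {q : ℝ} (hq : 1 < q) (t : ℝ) : |sgnRpow q t| = |t| ^ (q - 1) := by
  rcases eq_or_ne t 0 with rfl | ht
  · simp [sgnRpow, Real.zero_rpow (by linarith : q - 1 ≠ 0)]
  · rw [sgnRpow, ← sgnRpow_of_pos (abs_pos.2 ht), sgnRpow, abs_mul, abs_abs,
      abs_of_nonneg (Real.rpow_nonneg (abs_nonneg t) _)]

lemma sgnRpow_mul_of_pos {c : ℝ} (hc : 0 < c) (q t : ℝ) :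
    sgnRpow q (c * t) = c ^ (q - 1) * sgnRpow q t := by
  rw [sgnRpow, sgnRpow, abs_mul, abs_of_pos hc, Real.mul_rpow hc.le (abs_nonneg t),
    show q - 1 = (q - 2) + 1 by ring, Real.rpow_add_one hc.ne']
  ring

lemma abs_sgnRpow_le_one {q t : ℝ} (hq : 1 < q) (ht : |t| ≤ 1) : |sgnRpow q t| ≤ 1 := by
  rw [abs_sgnRpow hq]
  exact Real.rpow_le_one (abs_nonneg t) ht (by linarith)

lemma abs_sgnRpow_le_two_rpow {q P t : ℝ} (hq : 1 < q) (hqP : q ≤ P) (ht : |t| ≤ 2) :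
    |sgnRpow q t| ≤ 2 ^ (P - 1) :=
  calc |sgnRpow q t| = |t| ^ (q - 1) := abs_sgnRpow hq t
    _ ≤ 2 ^ (q - 1) := Real.rpow_le_rpow (abs_nonneg t) ht (by linarith)
    _ ≤ 2 ^ (P - 1) := Real.rpow_le_rpow_of_exponent_le one_le_two (by linarith)

lemma tendsto_sgnRpow_of_pos {q d : ℕ → ℝ} {d₀ : ℝ} (hd₀ : 0 < d₀)
    (hq : Tendsto q atTop (𝓝 1)) (hd : Tendsto d atTop (𝓝 d₀)) :
    Tendsto (fun k => sgnRpow (q k) (d k)) atTop (𝓝 1) := by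
  have hrpow : Tendsto (fun k => d k ^ (q k - 1)) atTop (𝓝 (d₀ ^ (0 : ℝ))) :=
    hd.rpow (by simpa using hq.sub_const 1) (Or.inl hd₀.ne')
  rw [Real.rpow_zero] at hrpow
  refine hrpow.congr' ?_
  filter_upwards [hd.eventually (lt_mem_nhds hd₀)] with k hk
  exact (sgnRpow_of_pos hk).symm

lemma mem_Sgn_of_tendsto_sgnRpow {q d : ℕ → ℝ} {d₀ z : ℝ} (hq1 : ∀ k, 1 < q k)
    (hq : Tendsto q atTop (𝓝 1)) (hd : Tendsto d atTop (𝓝 d₀))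
    (hz : Tendsto (fun k => sgnRpow (q k) (d k)) atTop (𝓝 z)) : z ∈ Sgn d₀ := by
  rcases lt_trichotomy 0 d₀ with hpos | rfl | hneg
  · have : z = 1 := tendsto_nhds_unique hz (tendsto_sgnRpow_of_pos hpos hq hd)
    simp [Sgn, hpos, this]
  · have hbound : ∀ᶠ k in atTop, |sgnRpow (q k) (d k)| ≤ 1 := by
      filter_upwards [hd.eventually (eventually_abs_sub_lt 0 one_pos)] with k hk
      exact abs_sgnRpow_le_one (hq1 k) (by simpa using hk.le)
    have : |z| ≤ 1 := le_of_tendsto hz.abs hbound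
    simpa [Sgn, abs_le] using this
  · have hnegz : Tendsto (fun k => sgnRpow (q k) (-d k)) atTop (𝓝 (-z)) := by
      simpa only [sgnRpow_neg] using hz.neg
    have : -z = 1 := tendsto_nhds_unique hnegz (tendsto_sgnRpow_of_pos (neg_pos.2 hneg) hq hd.neg)
    simp [Sgn, hneg, not_lt_of_gt hneg, neg_eq_iff_eq_neg.1 this]

section Eigenpairs

variable {n : ℕ} {G : SimpleGraph (Fin n)} [DecidableRel G.Adj]

lemma isEigenpairP_iff {p l : ℝ} {x : Fin n → ℝ} :
    IsEigenpairP G p l x ↔ x ≠ 0 ∧ ∀ i, (∑ j, if G.Adj i j then sgnRpow p (x i - x j) else 0) =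
      l * G.degree i * sgnRpow p (x i) :=
  Iff.rfl

lemma IsEigenpairP.smul {p l c : ℝ} {x : Fin n → ℝ} (hc : 0 < c) (h : IsEigenpairP G p l x) :
    IsEigenpairP G p l (c • x) := by
  rw [isEigenpairP_iff] at h ⊢
  refine ⟨smul_ne_zero hc.ne' h.1, fun i => ?_⟩
  have hterm : ∀ j, (if G.Adj i j then sgnRpow p ((c • x) i - (c • x) j) else 0) =
      c ^ (p - 1) * if G.Adj i j then sgnRpow p (x i - x j) else 0 := fun j => by
    split_ifs
    · rw [Pi.smul_apply, Pi.smul_apply, smul_eq_mul, smul_eq_mul, ← mul_sub,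
        sgnRpow_mul_of_pos hc]
    · rw [mul_zero]
  rw [Finset.sum_congr rfl fun j _ => hterm j, ← Finset.mul_sum, h.2 i, Pi.smul_apply,
    smul_eq_mul, sgnRpow_mul_of_pos hc]
  ring

lemma exists_isEigenpairP_norm_eq_one {p l : ℝ} {x : Fin n → ℝ} (h : IsEigenpairP G p l x) :
    ∃ y : Fin n → ℝ, ‖y‖ = 1 ∧ IsEigenpairP G p l y :=
  ⟨‖x‖⁻¹ • x, norm_smul_inv_norm h.1, h.smul (inv_pos.2 (norm_pos_iff.2 h.1))⟩

theorem IsEigenpair1.of_tendsto {q lam : ℕ → ℝ} {l : ℝ} {x : ℕ → Fin n → ℝ} {X W : Fin n → ℝ}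
    {Z : Fin n → Fin n → ℝ} (hq1 : ∀ k, 1 < q k) (hq : Tendsto q atTop (𝓝 1))
    (hlam : Tendsto lam atTop (𝓝 l)) (heig : ∀ k, IsEigenpairP G (q k) (lam k) (x k))
    (hx : Tendsto x atTop (𝓝 X)) (hX : X ≠ 0)
    (hW : Tendsto (fun k i => sgnRpow (q k) (x k i)) atTop (𝓝 W))
    (hZ : Tendsto (fun k i j => sgnRpow (q k) (x k i - x k j)) atTop (𝓝 Z)) :
    IsEigenpair1 G l X := by
  have hx' i : Tendsto (fun k => x k i) atTop (𝓝 (X i)) := tendsto_pi_nhds.1 hx i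
  have hW' i : Tendsto (fun k => sgnRpow (q k) (x k i)) atTop (𝓝 (W i)) := tendsto_pi_nhds.1 hW i
  have hZ' i j : Tendsto (fun k => sgnRpow (q k) (x k i - x k j)) atTop (𝓝 (Z i j)) :=
    tendsto_pi_nhds.1 (tendsto_pi_nhds.1 hZ i) j
  have hZ_anti i j : Z i j = -Z j i := by
    refine tendsto_nhds_unique (hZ' i j) ((hZ' j i).neg.congr fun k => ?_)
    rw [← sgnRpow_neg, neg_sub]
  have hsum i : (∑ j, if G.Adj i j then Z i j else 0) = l * G.degree i * W i := by
    have hlhs : Tendsto (fun k => ∑ j, if G.Adj i j then sgnRpow (q k) (x k i - x k j) else 0)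
        atTop (𝓝 (∑ j, if G.Adj i j then Z i j else 0)) :=
      tendsto_finsetSum _ fun j _ => by
        split_ifs
        exacts [hZ' i j, tendsto_const_nhds]
    exact tendsto_nhds_unique hlhs (((hlam.mul_const _).mul (hW' i)).congr fun k =>
      ((isEigenpairP_iff.1 (heig k)).2 i).symm)
  refine ⟨hX, Z, fun i j _ => mem_Sgn_of_tendsto_sgnRpow hq1 hq ((hx' i).sub (hx' j)) (hZ' i j),
    fun i j _ => hZ_anti i j, fun i => ⟨W i, ?_, (hsum i).symm⟩⟩
  exact mem_Sgn_of_tendsto_sgnRpow hq1 hq (hx' i) (hW' i)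

end Eigenpairs

theorem stmt12_general {n : ℕ} (G : SimpleGraph (Fin n)) [DecidableRel G.Adj]
    (p : ℕ → ℝ) (hp : ∀ m, 1 < p m)
    (hplim : Filter.Tendsto p Filter.atTop (nhds 1))
    (lam : ℕ → ℝ) (hlam : ∀ m, ∃ x : Fin n → ℝ, IsEigenpairP G (p m) (lam m) x)
    (l : ℝ) (hlim : Filter.Tendsto lam Filter.atTop (nhds l)) :
    ∃ x : Fin n → ℝ, IsEigenpair1 G l x := by
  choose x hx_norm hx_eig using fun m => exists_isEigenpairP_norm_eq_one (hlam m).choose_spec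
  obtain ⟨P, hP⟩ := hplim.bddAbove_range
  have hpP m : p m ≤ P := hP (Set.mem_range_self m)
  have hx_le m i : |x m i| ≤ 1 := by simpa [hx_norm m] using norm_le_pi_norm (x m) i
  set u : ℕ → (Fin n → ℝ) × (Fin n → ℝ) × (Fin n → Fin n → ℝ) := fun m =>
    (x m, fun i => sgnRpow (p m) (x m i), fun i j => sgnRpow (p m) (x m i - x m j))
  have hu_bdd m : u m ∈ Metric.closedBall 0 (2 ^ (P - 1)) := by
    have h2 : (1 : ℝ) ≤ 2 ^ (P - 1) :=
      Real.one_le_rpow one_le_two (by linarith [hp m, hpP m])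
    have hdiff i j : |x m i - x m j| ≤ 2 := (abs_sub _ _).trans (by linarith [hx_le m i, hx_le m j])
    simp only [u, mem_closedBall_zero_iff, Prod.norm_def, max_le_iff, hx_norm m, h2, true_and,
      pi_norm_le_iff_of_nonneg (zero_le_one.trans h2), Real.norm_eq_abs]
    exact ⟨fun i => abs_sgnRpow_le_two_rpow (hp m) (hpP m) ((hx_le m i).trans one_le_two),
      fun i j => abs_sgnRpow_le_two_rpow (hp m) (hpP m) (hdiff i j)⟩
  obtain ⟨⟨X, W, Z⟩, -, φ, hφ, hu⟩ := tendsto_subseq_of_bounded Metric.isBounded_closedBall hu_bdd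
  have hX_lim : Tendsto (fun k => x (φ k)) atTop (𝓝 X) := hu.fst_nhds
  have hX : X ≠ 0 := by
    have : ‖X‖ = 1 := tendsto_nhds_unique hX_lim.norm (by simp [hx_norm])
    exact norm_ne_zero_iff.1 (by simp [this])
  exact ⟨X, IsEigenpair1.of_tendsto (fun k => hp (φ k)) (hplim.comp hφ.tendsto_atTop)
    (hlim.comp hφ.tendsto_atTop) (fun k => hx_eig (φ k)) hX_lim hX hu.snd_nhds.fst_nhds
    hu.snd_nhds.snd_nhds⟩

/-- **Limits of `Δ_{p_m}`-eigenvalues as `p_m → 1⁺` are `Δ_1`-eigenvalues.** -/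
theorem stmt12 {n : ℕ} (G : SimpleGraph (Fin n)) [DecidableRel G.Adj]
    (hdeg : ∀ i, 0 < G.degree i) (p : ℕ → ℝ) (hp : ∀ m, 1 < p m)
    (hplim : Filter.Tendsto p Filter.atTop (nhds 1))
    (lam : ℕ → ℝ) (hlam : ∀ m, ∃ x : Fin n → ℝ, IsEigenpairP G (p m) (lam m) x)
    (l : ℝ) (hlim : Filter.Tendsto lam Filter.atTop (nhds l)) :
    ∃ x : Fin n → ℝ, IsEigenpair1 G l x :=
  stmt12_general G p hp hplim lam hlam l hlim
end
end
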